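/- arXiv:1912.07779 — 8 statements merged into one kernel-verified Lean document; each statement's English description precedes it below -/
import Mathlib

section
/- Let S = (V,E) be a ρ-uniform α-regular linear set system of order n with θ = nα/ρ blocks, and let σ : E → {1,…,θ} be a bijection. Then the access-variance satisfies Var(S_σ) = 2·Σ_{{e,e'}} σ(e)σ(e') + ρθ(θ+1)(2θ+1)/6 − ραθ(θ+1)²/4, where the sum runs over all unordered pairs {e,e'} of distinct blocks with e ∩ e' ≠ ∅ (equality of rational numbers). -/
open Finset

lemma gauss1 (θ : ℕ) : ∑ k ∈ Icc 1 θ, (k : ℚ) = θ * (θ + 1) / 2 := by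
  induction θ with
  | zero => simp
  | succ m ih =>
      rw [Finset.sum_Icc_succ_top (by omega), ih]
      push_cast; ring

lemma gauss2 (θ : ℕ) : ∑ k ∈ Icc 1 θ, (k : ℚ) ^ 2 = θ * (θ + 1) * (2 * θ + 1) / 6 := by
  induction θ with
  | zero => simp
  | succ m ih =>
      rw [Finset.sum_Icc_succ_top (by omega), ih]
      push_cast; ring

lemma sum_bij_Icc {V : Type*} [DecidableEq V] (E : Finset (Finset V)) (θ : ℕ)
    (σ : Finset V → ℕ) (hσ : Set.BijOn σ ↑E (Set.Icc 1 θ)) (f : ℕ → ℚ) :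
    ∑ e ∈ E, f (σ e) = ∑ k ∈ Icc 1 θ, f k := by
  apply Finset.sum_bij (fun e _ => σ e)
  · intro e he
    have := hσ.mapsTo he
    simpa [Finset.mem_Icc] using this
  · intro a ha b hb h
    exact hσ.injOn ha hb h
  · intro k hk
    obtain ⟨e, he, hek⟩ := hσ.surjOn (by simpa [Set.mem_Icc] using Finset.mem_Icc.mp hk)
    exact ⟨e, he, hek⟩
  · intro e he; rfl

/-- Let `S = (V,E)` be a ρ-uniform α-regular linear set system of order `n`
with `θ = nα/ρ` blocks, and `σ : E → {1,…,θ}` a bijection.  Then the access-variance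
`Var(S_σ) = Σ_v (p_v − α(θ+1)/2)²` equals
`2·Σ_{{e,e'}} σ(e)σ(e') + ρθ(θ+1)(2θ+1)/6 − ραθ(θ+1)²/4`, where the sum runs over all
unordered pairs of distinct intersecting blocks (equivalently, the sum over all *ordered*
pairs of distinct intersecting blocks counts each unordered pair exactly twice). -/
theorem statement0 {V : Type*} [Fintype V] [DecidableEq V]
    (n ρ α θ : ℕ) (hn : Fintype.card V = n)
    (E : Finset (Finset V)) (hE : E.card = θ) (hθ : n * α = θ * ρ)
    (huniform : ∀ e ∈ E, e.card = ρ)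
    (hregular : ∀ v : V, (E.filter (fun e => v ∈ e)).card = α)
    (hlinear : ∀ e ∈ E, ∀ e' ∈ E, e ≠ e' → (e ∩ e').card ≤ 1)
    (σ : Finset V → ℕ)
    (hσ : Set.BijOn σ ↑E (Set.Icc 1 θ)) :
    ∑ v : V, ((∑ e ∈ E.filter (fun e => v ∈ e), (σ e : ℚ)) - α * (θ + 1) / 2) ^ 2 =
      (∑ p ∈ E.offDiag.filter (fun p => (p.1 ∩ p.2).Nonempty), (σ p.1 : ℚ) * σ p.2)
        + ρ * θ * (θ + 1) * (2 * θ + 1) / 6 - ρ * α * θ * (θ + 1) ^ 2 / 4 := by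
  have hS1 : ∑ e ∈ E, (σ e : ℚ) = θ * (θ + 1) / 2 :=
    (sum_bij_Icc E θ σ hσ (fun k => (k : ℚ))).trans (gauss1 θ)
  have hS2 : ∑ e ∈ E, (σ e : ℚ) ^ 2 = θ * (θ + 1) * (2 * θ + 1) / 6 :=
    (sum_bij_Icc E θ σ hσ (fun k => (k : ℚ) ^ 2)).trans (gauss2 θ)
  set p : V → ℚ := fun v => ∑ e ∈ E.filter (fun e => v ∈ e), (σ e : ℚ) with hp
  -- sum of p
  have hP1 : ∑ v : V, p v = ρ * (θ * (θ + 1) / 2) := by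
    have : ∑ v : V, p v = ∑ e ∈ E, (e.card : ℚ) * σ e := by
      simp only [hp, Finset.sum_filter]
      rw [Finset.sum_comm]
      refine Finset.sum_congr rfl fun e he => ?_
      rw [Finset.sum_ite_mem, Finset.univ_inter, Finset.sum_const, nsmul_eq_mul]
    rw [this, ← hS1, Finset.mul_sum]
    refine Finset.sum_congr rfl fun e he => ?_
    rw [huniform e he]
  -- sum of p^2
  have hP2 : ∑ v : V, (p v) ^ 2 =
      ∑ e ∈ E, ∑ e' ∈ E, ((e ∩ e').card : ℚ) * (σ e * σ e') := by
    have h1 : ∀ v : V, (p v) ^ 2 =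
        ∑ e ∈ E, ∑ e' ∈ E,
          (if v ∈ e then (σ e : ℚ) else 0) * (if v ∈ e' then (σ e' : ℚ) else 0) := by
      intro v
      rw [sq, hp]
      simp only [Finset.sum_filter]
      rw [Finset.sum_mul_sum]
    simp only [h1]
    rw [Finset.sum_comm]
    refine Finset.sum_congr rfl fun e he => ?_
    rw [Finset.sum_comm]
    refine Finset.sum_congr rfl fun e' he' => ?_
    have h2 : ∀ v : V,
        (if v ∈ e then (σ e : ℚ) else 0) * (if v ∈ e' then (σ e' : ℚ) else 0) =
        if v ∈ e ∩ e' then (σ e : ℚ) * σ e' else 0 := by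
      intro v
      by_cases h : v ∈ e <;> by_cases h' : v ∈ e' <;> simp [h, h']
    simp only [h2]
    rw [Finset.sum_ite_mem, Finset.univ_inter, Finset.sum_const, nsmul_eq_mul]
  -- split into diagonal and off-diagonal
  have hsplit : ∑ e ∈ E, ∑ e' ∈ E, ((e ∩ e').card : ℚ) * (σ e * σ e') =
      (∑ e ∈ E, (e.card : ℚ) * (σ e) ^ 2) +
      ∑ q ∈ E.offDiag, ((q.1 ∩ q.2).card : ℚ) * (σ q.1 * σ q.2) := by
    rw [← Finset.sum_product']
    rw [← Finset.diag_union_offDiag E,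
      Finset.sum_union (Finset.disjoint_diag_offDiag E), Finset.sum_diag]
    congr 1
    refine Finset.sum_congr rfl fun e he => ?_
    rw [Finset.inter_self, sq]
  have hdiag : ∑ e ∈ E, (e.card : ℚ) * (σ e) ^ 2 = ρ * (θ * (θ + 1) * (2 * θ + 1) / 6) := by
    rw [← hS2, Finset.mul_sum]
    refine Finset.sum_congr rfl fun e he => ?_
    rw [huniform e he]
  have hoff : ∑ q ∈ E.offDiag, ((q.1 ∩ q.2).card : ℚ) * (σ q.1 * σ q.2) =
      ∑ q ∈ E.offDiag.filter (fun q => (q.1 ∩ q.2).Nonempty), (σ q.1 : ℚ) * σ q.2 := by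
    rw [Finset.sum_filter]
    refine Finset.sum_congr rfl fun q hq => ?_
    obtain ⟨h1, h2, hne⟩ := Finset.mem_offDiag.mp hq
    by_cases h : (q.1 ∩ q.2).Nonempty
    · have hle := hlinear q.1 h1 q.2 h2 hne
      have hge : 1 ≤ (q.1 ∩ q.2).card := Finset.card_pos.mpr h
      have : (q.1 ∩ q.2).card = 1 := le_antisymm hle hge
      simp [h, this]
    · have : (q.1 ∩ q.2).card = 0 := by
        simpa [Finset.card_eq_zero, Finset.not_nonempty_iff_eq_empty] using h
      simp [h, this]
  -- expand the square
  have hexpand : ∑ v : V, (p v - α * (θ + 1) / 2) ^ 2 =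
      (∑ v : V, (p v) ^ 2) - 2 * (α * (θ + 1) / 2) * (∑ v : V, p v)
        + (Fintype.card V : ℚ) * (α * (θ + 1) / 2) ^ 2 := by
    simp only [sub_sq]
    rw [Finset.sum_add_distrib, Finset.sum_sub_distrib, Finset.sum_const, nsmul_eq_mul,
      Finset.card_univ, ← Finset.sum_mul, ← Finset.mul_sum]
    ring
  have hθQ : (n : ℚ) * α = θ * ρ := by exact_mod_cast congrArg (Nat.cast : ℕ → ℚ) hθ
  rw [hexpand, hP2, hsplit, hdiag, hoff, hP1, hn]
  linear_combination (α * ((θ : ℚ) + 1) ^ 2 / 4) * hθQ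
end

section
/- Let G be a finite simple graph with vertex set V of size N, and let f be a labeling of G with M(f) = M(G), i.e., f minimizes M among all labelings. If u and v are distinct non-adjacent vertices of G with f(u) < f(v), then Σ_{w ∈ N(u)} f(w) ≥ Σ_{w ∈ N(v)} f(w), where N(x) denotes the neighborhood of x in G. -/
open Finset

/-- The product-sum M(f) of a vertex labeling: the sum of `f u * f v` over all edges
`{u,v}` of `G`, each edge counted exactly once. -/
noncomputable def prodSum {V : Type*} [Fintype V] (G : SimpleGraph V) (f : V → ℕ) : ℕ := by
  classical
  exact ∑ e ∈ G.edgeFinset, Sym2.lift ⟨fun u v => f u * f v, fun u v => Nat.mul_comm _ _⟩ e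

/-- A labeling of a graph on `V`: a bijection from the vertices onto `{1,…,|V|}`. -/
def IsLabeling (V : Type*) [Fintype V] (f : V → ℕ) : Prop :=
  Set.BijOn f Set.univ (Set.Icc 1 (Fintype.card V))

/-- MinPS of `G`: the minimum of `M(f)` over all labelings `f`. -/
noncomputable def minPS {V : Type*} [Fintype V] (G : SimpleGraph V) : ℕ :=
  sInf { m | ∃ f : V → ℕ, IsLabeling V f ∧ prodSum G f = m }


/-! Swapping the labels of two non-adjacent vertices `u`, `v` changes only the products on
edges at `u` or `v`, and changes them by `(f v - f u) * (S u - S v)`, where `S x` is the sum of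
the labels on the neighbourhood of `x`. Since the swapped labeling is again a labeling, minimality
of `f` makes this change non-negative, and `f u < f v` forces `S v ≤ S u`. -/

namespace SimpleGraph

variable {V : Type*}

def edgeWeight (f : V → ℕ) : Sym2 V → ℕ :=
  Sym2.lift ⟨fun a b => f a * f b, fun _ _ => Nat.mul_comm _ _⟩

@[simp]
lemma edgeWeight_mk (f : V → ℕ) (a b : V) : edgeWeight f s(a, b) = f a * f b := rfl

lemma edgeWeight_comp_swap_of_notMem [DecidableEq V] (f : V → ℕ) {u v : V} {e : Sym2 V}
    (hu : u ∉ e) (hv : v ∉ e) : edgeWeight (f ∘ Equiv.swap u v) e = edgeWeight f e := by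
  induction e with
  | h a b =>
    simp only [Sym2.mem_iff, not_or] at hu hv
    simp [Equiv.swap_apply_of_ne_of_ne (Ne.symm hu.1) (Ne.symm hv.1),
      Equiv.swap_apply_of_ne_of_ne (Ne.symm hu.2) (Ne.symm hv.2)]

variable [Fintype V] (G : SimpleGraph V) [DecidableRel G.Adj]

lemma prodSum_eq_sum_edgeWeight (f : V → ℕ) :
    prodSum G f = ∑ e ∈ G.edgeFinset, edgeWeight f e := by
  unfold prodSum
  congr 1
  ext
  simp

variable [DecidableEq V]

lemma sum_incidenceFinset_edgeWeight (f : V → ℕ) (x : V) :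
    ∑ e ∈ G.incidenceFinset x, edgeWeight f e = f x * ∑ w ∈ G.neighborFinset x, f w := by
  have : G.incidenceFinset x = (G.neighborFinset x).image (fun w => s(x, w)) := by
    ext e
    induction e with
    | h a b =>
      simp only [mem_incidenceFinset, mk'_mem_incidenceSet_iff, mem_image, mem_neighborFinset,
        Sym2.eq_iff]
      grind [G.adj_symm]
  rw [this, sum_image fun _ _ _ _ => Sym2.congr_right.mp, mul_sum]
  rfl

lemma sum_edgeFinset_eq_of_not_adj {M : Type*} [AddCommMonoid M] (φ : Sym2 V → M) {u v : V}
    (huv : u ≠ v) (hadj : ¬ G.Adj u v) :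
    ∑ e ∈ G.edgeFinset, φ e = ∑ e ∈ G.incidenceFinset u, φ e + ∑ e ∈ G.incidenceFinset v, φ e
      + ∑ e ∈ G.edgeFinset with u ∉ e ∧ v ∉ e, φ e := by
  have hv : {e ∈ G.edgeFinset | u ∉ e ∧ v ∈ e} = G.incidenceFinset v := by
    ext e
    induction e with
    | h a b =>
      simp only [mem_filter, mem_edgeFinset, mem_edgeSet, Sym2.mem_iff, mem_incidenceFinset,
        mk'_mem_incidenceSet_iff]
      grind [G.adj_symm, G.ne_of_adj]
  rw [← sum_filter_add_sum_filter_not G.edgeFinset (u ∈ ·), ← G.incidenceFinset_eq_filter,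
    ← sum_filter_add_sum_filter_not (G.edgeFinset.filter (u ∉ ·)) (v ∈ ·),
    filter_filter, filter_filter, hv, add_assoc]

lemma sum_neighborFinset_comp_swap_left (f : V → ℕ) {u v : V} (hadj : ¬ G.Adj u v) :
    ∑ w ∈ G.neighborFinset u, f (Equiv.swap u v w) = ∑ w ∈ G.neighborFinset u, f w :=
  sum_congr rfl fun w hw => by
    rw [mem_neighborFinset] at hw
    have hwv : w ≠ v := by rintro rfl; exact hadj hw
    rw [Equiv.swap_apply_of_ne_of_ne (G.ne_of_adj hw).symm hwv]

/-- `(f v - f u) * (S u - S v)` is the change of `prodSum`, moved across to avoid truncated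
subtraction. -/
lemma prodSum_comp_swap_add (f : V → ℕ) {u v : V} (huv : u ≠ v) (hadj : ¬ G.Adj u v) :
    prodSum G (f ∘ Equiv.swap u v)
        + (f u * ∑ w ∈ G.neighborFinset u, f w + f v * ∑ w ∈ G.neighborFinset v, f w)
      = prodSum G f
        + (f v * ∑ w ∈ G.neighborFinset u, f w + f u * ∑ w ∈ G.neighborFinset v, f w) := by
  have hrest : ∑ e ∈ G.edgeFinset with u ∉ e ∧ v ∉ e, edgeWeight (f ∘ Equiv.swap u v) e
      = ∑ e ∈ G.edgeFinset with u ∉ e ∧ v ∉ e, edgeWeight f e :=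
    sum_congr rfl fun e he => edgeWeight_comp_swap_of_notMem f (mem_filter.mp he).2.1
      (mem_filter.mp he).2.2
  have hNv :
      ∑ w ∈ G.neighborFinset v, f (Equiv.swap u v w) = ∑ w ∈ G.neighborFinset v, f w := by
    simpa [Equiv.swap_comm] using
      G.sum_neighborFinset_comp_swap_left f (u := v) (v := u) (fun h => hadj h.symm)
  simp only [prodSum_eq_sum_edgeWeight, G.sum_edgeFinset_eq_of_not_adj _ huv hadj,
    sum_incidenceFinset_edgeWeight, hrest, Function.comp_apply, Equiv.swap_apply_left,
    Equiv.swap_apply_right, G.sum_neighborFinset_comp_swap_left f hadj, hNv]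
  ring

end SimpleGraph

lemma IsLabeling.comp_perm {V : Type*} [Fintype V] {f : V → ℕ} (hf : IsLabeling V f)
    (σ : Equiv.Perm V) : IsLabeling V (f ∘ σ) :=
  hf.comp (Set.bijOn_univ.mpr σ.bijective)

lemma prodSum_le_of_eq_minPS {V : Type*} [Fintype V] {G : SimpleGraph V} {f g : V → ℕ}
    (hmin : prodSum G f = minPS G) (hg : IsLabeling V g) : prodSum G f ≤ prodSum G g :=
  hmin ▸ Nat.sInf_le ⟨g, hg, rfl⟩

/-- If `f` is a labeling of `G` achieving the MinPS, and `u, v` are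
distinct non-adjacent vertices with `f u < f v`, then the sum of the labels over the
neighborhood of `u` is at least the sum of the labels over the neighborhood of `v`. -/
theorem statement1 {V : Type*} [Fintype V] [DecidableEq V]
    (G : SimpleGraph V) [DecidableRel G.Adj] (f : V → ℕ)
    (hf : IsLabeling V f) (hmin : prodSum G f = minPS G)
    (u v : V) (huv : u ≠ v) (hadj : ¬ G.Adj u v) (hlt : f u < f v) :
    ∑ w ∈ G.neighborFinset v, f w ≤ ∑ w ∈ G.neighborFinset u, f w := by
  have hle := prodSum_le_of_eq_minPS hmin (hf.comp_perm (Equiv.swap u v))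
  have hswap := G.prodSum_comp_swap_add f huv hadj
  have hcmp : f u * ∑ w ∈ G.neighborFinset u, f w + f v * ∑ w ∈ G.neighborFinset v, f w
      ≤ f v * ∑ w ∈ G.neighborFinset u, f w + f u * ∑ w ∈ G.neighborFinset v, f w := by
    omega
  by_contra! hcon
  nlinarith
end

section
/- Let G be a finite simple d-regular graph with θ vertices. Then 24·M(G) ≤ d·(3θ+2)·θ·(θ+1); that is, there exists a labeling f of G with 24·M(f) ≤ d(3θ+2)θ(θ+1). -/
open Finset

lemma prodSum_eq {V : Type*} [Fintype V] [DecidableEq V] (G : SimpleGraph V)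
    [DecidableRel G.Adj] (f : V → ℕ) :
    prodSum G f = ∑ e ∈ G.edgeFinset,
      Sym2.lift ⟨fun u v => f u * f v, fun u v => Nat.mul_comm _ _⟩ e := by
  unfold prodSum
  refine Finset.sum_congr ?_ (fun _ _ => rfl)
  ext e
  simp [SimpleGraph.mem_edgeFinset]

lemma sum_range_add_one (n : ℕ) : 2 * ∑ i ∈ Finset.range n, (i + 1) = n * (n + 1) := by
  induction n with
  | zero => simp
  | succ k ih => rw [Finset.sum_range_succ, mul_add, ih]; ring

lemma sum_range_add_one_sq (n : ℕ) :
    6 * ∑ i ∈ Finset.range n, (i + 1) ^ 2 = n * (n + 1) * (2 * n + 1) := by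
  induction n with
  | zero => simp
  | succ k ih => rw [Finset.sum_range_succ, mul_add, ih]; ring

lemma offDiag_sum_sq {V : Type*} [Fintype V] [DecidableEq V] (f : V → ℕ) :
    ∑ p ∈ (univ : Finset V).offDiag, f p.1 * f p.2 + ∑ v, f v ^ 2
      = (∑ v, f v) ^ 2 := by
  have h1 : (∑ v, f v) ^ 2 = ∑ p ∈ (univ : Finset V) ×ˢ univ, f p.1 * f p.2 := by
    rw [sq, Finset.sum_mul_sum, Finset.sum_product]
  rw [h1, ← Finset.diag_union_offDiag (univ : Finset V),
    Finset.sum_union (Finset.disjoint_diag_offDiag _), Finset.sum_diag]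
  simp [sq, add_comm]

lemma perm_sum_pair_const {V : Type*} [Fintype V] [DecidableEq V] (g : V → ℕ)
    {u v u' v' : V} (huv : u ≠ v) (h' : u' ≠ v') :
    ∑ π : Equiv.Perm V, g (π u) * g (π v) = ∑ π : Equiv.Perm V, g (π u') * g (π v') := by
  set w := Equiv.swap u u' v with hw
  have hwu' : w ≠ u' := by
    rw [hw, Equiv.swap_apply_def]
    split_ifs with h1 h2
    · exact absurd h1.symm huv
    · intro h; exact huv (h.trans h2.symm)
    · exact h2
  set τ : Equiv.Perm V := Equiv.swap w v' * Equiv.swap u u' with hτ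
  have hτu : τ u = u' := by
    rw [hτ, Equiv.Perm.mul_apply, Equiv.swap_apply_left,
      Equiv.swap_apply_of_ne_of_ne hwu'.symm h']
  have hτv : τ v = v' := by
    rw [hτ, Equiv.Perm.mul_apply, ← hw, Equiv.swap_apply_left]
  refine (Fintype.sum_equiv (Equiv.mulRight τ)
    (fun π => g (π u') * g (π v')) (fun π => g (π u) * g (π v)) ?_).symm
  intro π
  simp [Equiv.Perm.mul_apply, hτu, hτv]

lemma isLabeling_aux {V : Type*} [Fintype V] {n : ℕ} (hc : Fintype.card V = n)
    (e0 : V ≃ Fin n) (π : Equiv.Perm V) :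
    IsLabeling V (fun v => (e0 (π v) : ℕ) + 1) := by
  refine ⟨fun x _ => ?_, fun a _ b _ h => ?_, fun m hm => ?_⟩
  · have := (e0 (π x)).isLt
    simp only [Set.mem_Icc, hc]
    omega
  · simp only at h
    have : e0 (π a) = e0 (π b) := Fin.ext (by omega)
    exact π.injective (e0.injective this)
  · rw [Set.mem_Icc, hc] at hm
    obtain ⟨hm1, hm2⟩ := hm
    refine ⟨π.symm (e0.symm ⟨m - 1, by omega⟩), trivial, ?_⟩
    simp only [Equiv.apply_symm_apply]
    omega

/-- For a `d`-regular graph `G` on `θ` vertices,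
`24·M(G) ≤ d(3θ+2)θ(θ+1)`; that is, there exists a labeling `f` with
`24·M(f) ≤ d(3θ+2)θ(θ+1)`. -/
theorem statement2 {V : Type*} [Fintype V] [DecidableEq V]
    (G : SimpleGraph V) [DecidableRel G.Adj] (d θ : ℕ)
    (hθ : Fintype.card V = θ) (hreg : G.IsRegularOfDegree d) :
    24 * minPS G ≤ d * (3 * θ + 2) * θ * (θ + 1) ∧
      ∃ f : V → ℕ, IsLabeling V f ∧ 24 * prodSum G f ≤ d * (3 * θ + 2) * θ * (θ + 1) := by
  classical
  have key : ∃ f : V → ℕ, IsLabeling V f ∧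
      24 * prodSum G f ≤ d * (3 * θ + 2) * θ * (θ + 1) := by
    rcases le_or_gt θ 1 with hθ1 | hθ1
    · -- no edges
      have hE : G.edgeFinset = ∅ := by
        ext e
        simp only [SimpleGraph.mem_edgeFinset, Finset.notMem_empty, iff_false]
        intro he
        induction e using Sym2.ind with
        | _ u v =>
          rw [SimpleGraph.mem_edgeSet] at he
          have hne : u ≠ v := G.ne_of_adj he
          have : 1 < Fintype.card V := Fintype.one_lt_card_iff_nontrivial.mpr ⟨u, v, hne⟩
          omega
      refine ⟨_, isLabeling_aux hθ (Fintype.equivFinOfCardEq hθ) 1, ?_⟩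
      rw [prodSum_eq, hE]
      simp
    -- main case
    obtain ⟨m, rfl⟩ : ∃ m, θ = m + 2 := ⟨θ - 2, by omega⟩
    obtain ⟨e0⟩ : Nonempty (V ≃ Fin (m + 2)) := ⟨Fintype.equivFinOfCardEq hθ⟩
    set g : V → ℕ := fun v => (e0 v : ℕ) + 1 with hg
    have hlab : ∀ π : Equiv.Perm V, IsLabeling V (g ∘ π) :=
      fun π => isLabeling_aux hθ e0 π
    have hgs : ∑ v, g v = ∑ i ∈ Finset.range (m + 2), (i + 1) := by
      rw [hg, ← Fin.sum_univ_eq_sum_range (fun i => i + 1) (m + 2)]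
      exact Equiv.sum_comp e0 (fun i : Fin (m + 2) => (i : ℕ) + 1)
    have hgs2 : ∑ v, g v ^ 2 = ∑ i ∈ Finset.range (m + 2), (i + 1) ^ 2 := by
      rw [hg, ← Fin.sum_univ_eq_sum_range (fun i => (i + 1) ^ 2) (m + 2)]
      exact Equiv.sum_comp e0 (fun i : Fin (m + 2) => ((i : ℕ) + 1) ^ 2)
    have hs1 : 2 * ∑ v, g v = (m + 2) * (m + 3) := by
      rw [hgs, sum_range_add_one]
    have hs2 : 6 * ∑ v, g v ^ 2 = (m + 2) * (m + 3) * (2 * (m + 2) + 1) := by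
      rw [hgs2, sum_range_add_one_sq]
    set D : ℕ := ∑ p ∈ (univ : Finset V).offDiag, g p.1 * g p.2 with hD
    have h12D : 12 * D = (m + 1) * ((3 * (m + 2) + 2) * (m + 2) * (m + 3)) := by
      have hq : 4 * (∑ v, g v) ^ 2 = ((m + 2) * (m + 3)) ^ 2 := by rw [← hs1]; ring
      have hsq := offDiag_sum_sq g
      rw [← hD] at hsq
      have h12 : 12 * D + 12 * ∑ v, g v ^ 2 = 12 * (∑ v, g v) ^ 2 := by
        linarith [hsq]
      have hid : (m + 1) * ((3 * (m + 2) + 2) * (m + 2) * (m + 3))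
          + 2 * ((m + 2) * (m + 3) * (2 * (m + 2) + 1))
          = 3 * ((m + 2) * (m + 3)) ^ 2 := by ring
      linarith [h12, hq, hs2, hid]
    have hπD : ∀ π : Equiv.Perm V,
        ∑ p ∈ (univ : Finset V).offDiag, g (π p.1) * g (π p.2) = D := by
      intro π
      have h1 := offDiag_sum_sq (g ∘ π)
      have h2 := offDiag_sum_sq g
      rw [← hD] at h2
      have e1 : ∑ v, (g ∘ π) v = ∑ v, g v := Equiv.sum_comp π g
      have e2 : ∑ v, (g ∘ π) v ^ 2 = ∑ v, g v ^ 2 := Equiv.sum_comp π (fun v => g v ^ 2)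
      simp only [Function.comp_apply] at h1 e1 e2
      rw [e1, e2, ← h2] at h1
      exact Nat.add_right_cancel h1
    have hoffcard : ((univ : Finset V).offDiag).card = (m + 1) * (m + 2) := by
      rw [Finset.offDiag_card, Finset.card_univ, hθ]
      have : (m + 2) * (m + 2) = (m + 1) * (m + 2) + (m + 2) := by ring
      omega
    have hpair : ∀ u v : V, u ≠ v →
        ((m + 1) * (m + 2)) * (∑ π : Equiv.Perm V, g (π u) * g (π v))
          = (m + 2).factorial * D := by
      intro u v huv
      calc ((m + 1) * (m + 2)) * (∑ π : Equiv.Perm V, g (π u) * g (π v))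
          = ∑ _p ∈ (univ : Finset V).offDiag,
              (∑ π : Equiv.Perm V, g (π u) * g (π v)) := by
            rw [Finset.sum_const, hoffcard, smul_eq_mul]
        _ = ∑ p ∈ (univ : Finset V).offDiag,
              (∑ π : Equiv.Perm V, g (π p.1) * g (π p.2)) :=
            Finset.sum_congr rfl (fun p hp =>
              (perm_sum_pair_const g (Finset.mem_offDiag.mp hp).2.2 huv).symm)
        _ = ∑ π : Equiv.Perm V,
              ∑ p ∈ (univ : Finset V).offDiag, g (π p.1) * g (π p.2) :=
            Finset.sum_comm
        _ = ∑ _π : Equiv.Perm V, D := Finset.sum_congr rfl (fun π _ => hπD π)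
        _ = (m + 2).factorial * D := by
            rw [Finset.sum_const, Finset.card_univ, Fintype.card_perm, hθ, smul_eq_mul]
    set T : ℕ := ∑ π : Equiv.Perm V, prodSum G (g ∘ π) with hT
    have hTE : T = ∑ e ∈ G.edgeFinset, ∑ π : Equiv.Perm V,
        Sym2.lift ⟨fun a b => (g ∘ π) a * (g ∘ π) b, fun a b => Nat.mul_comm _ _⟩ e := by
      rw [hT]
      have step1 : ∑ π : Equiv.Perm V, prodSum G (g ∘ π)
          = ∑ π : Equiv.Perm V, ∑ e ∈ G.edgeFinset,
              Sym2.lift ⟨fun a b => (g ∘ π) a * (g ∘ π) b, fun a b => Nat.mul_comm _ _⟩ e :=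
        Finset.sum_congr rfl (fun π _ => prodSum_eq G (g ∘ π))
      rw [step1]
      exact Finset.sum_comm
    have hper : ∀ e ∈ G.edgeFinset, ((m + 1) * (m + 2)) * (∑ π : Equiv.Perm V,
        Sym2.lift ⟨fun a b => (g ∘ π) a * (g ∘ π) b, fun a b => Nat.mul_comm _ _⟩ e)
          = (m + 2).factorial * D := by
      intro e he
      induction e using Sym2.ind with
      | _ u v =>
        rw [SimpleGraph.mem_edgeFinset, SimpleGraph.mem_edgeSet] at he
        simp only [Sym2.lift_mk, Function.comp_apply]
        exact hpair u v (G.ne_of_adj he)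
    have hKT : ((m + 1) * (m + 2)) * T
        = G.edgeFinset.card * ((m + 2).factorial * D) := by
      rw [hTE, Finset.mul_sum]
      exact (Finset.sum_congr rfl hper).trans (by rw [Finset.sum_const, smul_eq_mul])
    have h2E : 2 * G.edgeFinset.card = (m + 2) * d := by
      have h := G.sum_degrees_eq_twice_card_edges
      rw [Finset.sum_congr rfl (fun v _ => hreg v), Finset.sum_const, Finset.card_univ,
        hθ, smul_eq_mul] at h
      omega
    have hmain2 : 2 * (((m + 1) * (m + 2)) * (24 * T))
        = 2 * (((m + 1) * (m + 2)) * ((m + 2).factorial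
            * (d * (3 * (m + 2) + 2) * (m + 2) * (m + 2 + 1)))) := by
      calc 2 * (((m + 1) * (m + 2)) * (24 * T))
          = 24 * 2 * (((m + 1) * (m + 2)) * T) := by ring
        _ = 24 * 2 * (G.edgeFinset.card * ((m + 2).factorial * D)) := by rw [hKT]
        _ = (2 * G.edgeFinset.card) * (24 * ((m + 2).factorial * D)) := by ring
        _ = ((m + 2) * d) * (24 * ((m + 2).factorial * D)) := by rw [h2E]
        _ = ((m + 2) * d * (m + 2).factorial * 2) * (12 * D) := by ring
        _ = ((m + 2) * d * (m + 2).factorial * 2)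
              * ((m + 1) * ((3 * (m + 2) + 2) * (m + 2) * (m + 3))) := by rw [h12D]
        _ = 2 * (((m + 1) * (m + 2)) * ((m + 2).factorial
              * (d * (3 * (m + 2) + 2) * (m + 2) * (m + 2 + 1)))) := by ring
    have hmain : 24 * T = (m + 2).factorial
        * (d * (3 * (m + 2) + 2) * (m + 2) * (m + 2 + 1)) := by
      have h1 := Nat.eq_of_mul_eq_mul_left (by norm_num : 0 < 2) hmain2
      exact Nat.eq_of_mul_eq_mul_left (by positivity) h1
    have hsum : ∑ π : Equiv.Perm V, (24 * prodSum G (g ∘ π))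
        ≤ ∑ _π : Equiv.Perm V, d * (3 * (m + 2) + 2) * (m + 2) * (m + 2 + 1) := by
      apply le_of_eq
      rw [← Finset.mul_sum, ← hT, hmain, Finset.sum_const, Finset.card_univ,
        Fintype.card_perm, hθ, smul_eq_mul]
    obtain ⟨π, _, hπ⟩ := Finset.exists_le_of_sum_le (Finset.univ_nonempty) hsum
    exact ⟨g ∘ π, hlab π, hπ⟩
  obtain ⟨f, hf, hfb⟩ := key
  refine ⟨?_, f, hf, hfb⟩
  have hmem : minPS G ≤ prodSum G f := Nat.sInf_le ⟨f, hf, rfl⟩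
  calc 24 * minPS G ≤ 24 * prodSum G f := Nat.mul_le_mul_left 24 hmem
    _ ≤ _ := hfb
end

section
/- Let m ≥ 1 and r ≥ 1. For every labeling f of the graph mK_r, we have M(f) ≥ mr²(mr+1)²/8 − mr(mr+1)(2mr+1)/12 (an inequality of rational numbers). -/
/-!
Summing `f u * f v` over ordered pairs inside each clique gives
`2 M(f) + ∑ f(v)² = ∑ᵢ Sᵢ²`, where `Sᵢ` is the label sum of the `i`-th copy of `K_r`.
Since the labels are `1, …, mr`, both `∑ Sᵢ = mr(mr+1)/2` and `∑ f(v)²` are fixed, and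
Cauchy–Schwarz `(∑ Sᵢ)² ≤ m ∑ Sᵢ²` turns the identity into the bound.
-/

open Finset

/-- `mK_r`: the vertex-disjoint union of `m` copies of the complete graph `K_r`.
Vertex `(i, x)` lies in the `i`-th copy; two vertices are adjacent iff they are
distinct and lie in the same copy. -/
def mKGraph (m r : ℕ) : SimpleGraph (Fin m × Fin r) where
  Adj a b := a.1 = b.1 ∧ a.2 ≠ b.2
  symm := ⟨fun a b h => ⟨h.1.symm, h.2.symm⟩⟩
  loopless := ⟨fun a h => h.2 rfl⟩


namespace SimpleGraph

variable {V : Type*} [Fintype V] (G : SimpleGraph V) [DecidableRel G.Adj]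

theorem sum_dart_edge_eq_two_mul {M : Type*} [AddCommMonoid M] [DecidableEq V] (g : Sym2 V → M) :
    ∑ d : G.Dart, g d.edge = 2 • ∑ e ∈ G.edgeFinset, g e := by
  rw [← sum_fiberwise_of_maps_to (g := Dart.edge) (t := G.edgeFinset)
    fun d _ => G.mem_edgeFinset.2 d.edge_mem, smul_sum]
  refine sum_congr rfl fun e he => ?_
  rw [sum_congr rfl fun d hd => congrArg g (mem_filter.1 hd).2, sum_const,
    G.dart_edge_fiber_card e (G.mem_edgeFinset.1 he)]

theorem sum_adj_mul_eq_two_mul_prodSum (f : V → ℕ) :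
    ∑ p : V × V with G.Adj p.1 p.2, f p.1 * f p.2 = 2 * prodSum G f := by
  classical
  have hdart : ∑ p : V × V with G.Adj p.1 p.2, f p.1 * f p.2 = ∑ d : G.Dart, f d.fst * f d.snd :=
    sum_bij' (fun p hp => ⟨p, (mem_filter.1 hp).2⟩) (fun d _ => d.toProd)
      (by simp) (fun d _ => by simp [d.adj]) (by simp) (by simp) (by simp)
  rw [hdart, prodSum, ← smul_eq_mul]
  convert G.sum_dart_edge_eq_two_mul
    (Sym2.lift ⟨fun u v => f u * f v, fun u v => Nat.mul_comm _ _⟩) using 2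
  · rfl
  · -- `prodSum` builds `edgeFinset` from classical decidability of `G.Adj`
    congr!

end SimpleGraph

theorem Finset.sum_offDiag_mul_add_sum_sq {ι R : Type*} [DecidableEq ι] [CommSemiring R]
    (s : Finset ι) (g : ι → R) :
    ∑ p ∈ s.offDiag, g p.1 * g p.2 + ∑ i ∈ s, g i ^ 2 = (∑ i ∈ s, g i) ^ 2 := by
  rw [sq, sum_mul_sum, ← sum_product', ← diag_union_offDiag,
    sum_union (disjoint_diag_offDiag s), sum_diag, add_comm]
  simp only [sq]

@[simp]
theorem mKGraph_adj {m r : ℕ} {a b : Fin m × Fin r} :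
    (mKGraph m r).Adj a b ↔ a.1 = b.1 ∧ a.2 ≠ b.2 :=
  Iff.rfl

instance (m r : ℕ) : DecidableRel (mKGraph m r).Adj := fun _ _ => decidable_of_iff' _ mKGraph_adj

theorem mKGraph_sum_adj_mul (m r : ℕ) (f : Fin m × Fin r → ℕ) :
    ∑ p : (Fin m × Fin r) × (Fin m × Fin r) with (mKGraph m r).Adj p.1 p.2, f p.1 * f p.2 =
      ∑ i, ∑ q ∈ (univ : Finset (Fin r)).offDiag, f (i, q.1) * f (i, q.2) := by
  rw [← sum_product']
  refine sum_nbij' (fun p => (p.1.1, p.1.2, p.2.2)) (fun s => ((s.1, s.2.1), (s.1, s.2.2)))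
    ?_ ?_ ?_ ?_ ?_
  all_goals simp +contextual

theorem two_mul_prodSum_mKGraph_add_sum_sq (m r : ℕ) (f : Fin m × Fin r → ℕ) :
    2 * prodSum (mKGraph m r) f + ∑ v, f v ^ 2 = ∑ i, (∑ x, f (i, x)) ^ 2 := by
  rw [← SimpleGraph.sum_adj_mul_eq_two_mul_prodSum, mKGraph_sum_adj_mul, Fintype.sum_prod_type,
    ← sum_add_distrib]
  exact sum_congr rfl fun i _ => sum_offDiag_mul_add_sum_sq univ fun x => f (i, x)

theorem IsLabeling.sum_comp {V M : Type*} [Fintype V] [AddCommMonoid M] {f : V → ℕ}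
    (hf : IsLabeling V f) (g : ℕ → M) :
    ∑ v, g (f v) = ∑ k ∈ Icc 1 (Fintype.card V), g k :=
  sum_nbij f (fun v _ => by simpa using hf.mapsTo (Set.mem_univ v))
    (fun a _ b _ h => hf.injOn (Set.mem_univ a) (Set.mem_univ b) h)
    (fun k hk => by simpa using hf.surjOn (by simpa using hk)) fun _ _ => rfl

theorem sum_Icc_one_cast (N : ℕ) : ∑ k ∈ Icc 1 N, (k : ℚ) = N * (N + 1) / 2 := by
  induction N with
  | zero => simp
  | succ n ih =>
    rw [sum_Icc_succ_top (Nat.le_add_left 1 n), ih]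
    push_cast; ring

theorem sum_Icc_one_cast_sq (N : ℕ) :
    ∑ k ∈ Icc 1 N, (k : ℚ) ^ 2 = N * (N + 1) * (2 * N + 1) / 6 := by
  induction N with
  | zero => simp
  | succ n ih =>
    rw [sum_Icc_succ_top (Nat.le_add_left 1 n), ih]
    push_cast; ring

theorem statement3_general (m r : ℕ) (hm : 1 ≤ m)
    (f : Fin m × Fin r → ℕ) (hf : IsLabeling (Fin m × Fin r) f) :
    (m : ℚ) * r ^ 2 * (m * r + 1) ^ 2 / 8 - m * r * (m * r + 1) * (2 * m * r + 1) / 12 ≤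
      (prodSum (mKGraph m r) f : ℚ) := by
  have hcard : Fintype.card (Fin m × Fin r) = m * r := by simp
  have hsum : ∑ i : Fin m, ∑ x, (f (i, x) : ℚ) = m * r * (m * r + 1) / 2 := by
    rw [← Fintype.sum_prod_type' (f := fun i x => (f (i, x) : ℚ)), hf.sum_comp, hcard,
      sum_Icc_one_cast]
    push_cast; ring
  have hsq : ∑ v, (f v : ℚ) ^ 2 = m * r * (m * r + 1) * (2 * m * r + 1) / 6 := by
    rw [hf.sum_comp (fun k => (k : ℚ) ^ 2), hcard, sum_Icc_one_cast_sq]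
    push_cast; ring
  have hsplit : 2 * (prodSum (mKGraph m r) f : ℚ) + ∑ v, (f v : ℚ) ^ 2 =
      ∑ i : Fin m, (∑ x, (f (i, x) : ℚ)) ^ 2 := by
    exact_mod_cast two_mul_prodSum_mKGraph_add_sum_sq m r f
  have hcs := sq_sum_le_card_mul_sum_sq (s := univ) (f := fun i : Fin m => ∑ x, (f (i, x) : ℚ))
  rw [hsum, ← hsplit, hsq, card_univ, Fintype.card_fin] at hcs
  have hm' : (0 : ℚ) < m := by exact_mod_cast hm
  have hbound : (m : ℚ) * r ^ 2 * (m * r + 1) ^ 2 / 4 ≤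
      2 * prodSum (mKGraph m r) f + m * r * (m * r + 1) * (2 * m * r + 1) / 6 :=
    le_of_mul_le_mul_left (by linarith) hm'
  linarith

/-- For `m ≥ 1`, `r ≥ 1`, every labeling `f` of `mK_r` satisfies
`M(f) ≥ mr²(mr+1)²/8 − mr(mr+1)(2mr+1)/12`. -/
theorem statement3 (m r : ℕ) (hm : 1 ≤ m) (hr : 1 ≤ r)
    (f : Fin m × Fin r → ℕ) (hf : IsLabeling (Fin m × Fin r) f) :
    (m : ℚ) * r ^ 2 * (m * r + 1) ^ 2 / 8 - m * r * (m * r + 1) * (2 * m * r + 1) / 12 ≤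
      (prodSum (mKGraph m r) f : ℚ) :=
  statement3_general m r hm f hf
end

section
/- Let r ≥ 2 and r | n. Then M(T(n,r)) = Σ_{1 ≤ j < j' ≤ r} S_j · S_{j'}, where S_j = Σ_{k=(j−1)n/r+1}^{jn/r} k is the sum of the j-th consecutive block of n/r integers in {1,…,n}. That is, the MinPS of the Turán graph T(n,r) is achieved by assigning the n/r smallest labels to one part, the next n/r labels to another part, and so on. -/
open Finset

/-- The complete `r`-partite graph with all parts of size `l`: vertex `(i, x)` lies in
part `i`, and two vertices are adjacent iff they lie in different parts.  For `r ∣ n`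
and `l = n / r`, this is the Turán graph `T(n, r)`. -/
def equiTuranGraph (r l : ℕ) : SimpleGraph (Fin r × Fin l) where
  Adj a b := a.1 ≠ b.1
  symm := ⟨fun a b h => h.symm⟩
  loopless := ⟨fun a h => h rfl⟩

/-!
For a labeling `f` with part sums `S_j`, counting ordered pairs of vertices gives
`2 M(f) + ∑ S_j² = (∑ S_j)²`, and `∑ S_j = 1 + ⋯ + n` for every labeling. So the claim is that
`∑ S_j²` is largest for the block labeling, whose part sums are the block sums `B_j`.
Any `k` parts carry `k·(n/r)` distinct labels, so their sum is at most that of the top `k` blocks: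
the `S_j` are majorized by the `B_j`. Choosing the parts with `S_j > t` then gives
`∑ (S_j - t)₊ ≤ ∑ (B_j - t)₊` for every threshold `t` (this is truncated subtraction on `ℕ`), and
summing over `t` yields `∑ S_j (S_j + 1) ≤ ∑ B_j (B_j + 1)`.
-/

namespace Finset

theorem sum_le_sum_range_tsub {s : Finset ℕ} {c : ℕ} (hs : ∀ x ∈ s, x ≤ c) :
    ∑ x ∈ s, x ≤ ∑ n ∈ range #s, (c - n) := by
  have hZ := sum_le_sum_range (s := s.map Nat.castEmbedding) (c := (c : ℤ)) (by simpa using hs)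
  simp only [card_map, sum_map, Nat.castEmbedding_apply] at hZ
  have hcast : ∑ n ∈ range #s, ((c : ℤ) - n) ≤ ∑ n ∈ range #s, ((c - n : ℕ) : ℤ) :=
    sum_le_sum fun n _ => by omega
  have h := hZ.trans hcast
  rw [← Nat.cast_sum] at h
  exact_mod_cast h

theorem sum_range_tsub_eq_sum_Ioc {m c : ℕ} (h : m ≤ c) :
    ∑ n ∈ range m, (c - n) = ∑ x ∈ Ioc (c - m) c, x :=
  sum_nbij' (c - ·) (c - ·) (fun n hn => by simp only [mem_range, mem_Ioc] at hn ⊢; omega)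
    (fun x hx => by simp only [mem_range, mem_Ioc] at hx ⊢; omega)
    (fun n hn => by simp only [mem_range] at hn; omega)
    (fun x hx => by simp only [mem_Ioc] at hx; omega) (fun _ _ => rfl)

theorem two_mul_sum_range_tsub {a N : ℕ} (h : a ≤ N) :
    2 * ∑ t ∈ range (N + 1), (a - t) = a * (a + 1) := by
  rw [← sum_subset (range_subset_range.2 (Nat.succ_le_succ h))
    (fun t _ ht => by simp only [mem_range] at ht ⊢; omega)]
  have hreflect := sum_range_reflect (fun t => t) (a + 1)
  simp only [add_tsub_cancel_right] at hreflect
  rw [hreflect, mul_comm, sum_range_id_mul_two]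
  simp [mul_comm]

section Majorization

variable {ι κ : Type*} (I : Finset ι) (J : Finset κ) {s : ι → ℕ} {b : κ → ℕ}

theorem sum_tsub_le_sum_tsub_of_majorized
    (hmaj : ∀ K ⊆ I, ∃ K' ⊆ J, #K' = #K ∧ ∑ i ∈ K, s i ≤ ∑ k ∈ K', b k) (t : ℕ) :
    ∑ i ∈ I, (s i - t) ≤ ∑ k ∈ J, (b k - t) := by
  obtain ⟨K', hK'J, hcard, hle⟩ := hmaj (I.filter (t < s ·)) (filter_subset _ _)
  have hsK : ∑ i ∈ I.filter (t < s ·), (s i - t) + #(I.filter (t < s ·)) * t =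
      ∑ i ∈ I.filter (t < s ·), s i := by
    rw [← smul_eq_mul, ← sum_const, ← sum_add_distrib]
    exact sum_congr rfl fun i hi => by simp only [mem_filter] at hi; omega
  have hb : ∑ k ∈ K', b k ≤ ∑ k ∈ K', (b k - t) + #K' * t := by
    rw [← smul_eq_mul, ← sum_const, ← sum_add_distrib]
    exact sum_le_sum fun k _ => by omega
  calc ∑ i ∈ I, (s i - t) = ∑ i ∈ I.filter (t < s ·), (s i - t) :=
        (sum_filter_of_ne fun i _ h => by omega).symm
    _ ≤ ∑ k ∈ K', (b k - t) := by rw [hcard] at hb; omega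
    _ ≤ ∑ k ∈ J, (b k - t) := sum_le_sum_of_subset hK'J

theorem sum_sq_le_sum_sq_of_majorized
    (hmaj : ∀ K ⊆ I, ∃ K' ⊆ J, #K' = #K ∧ ∑ i ∈ K, s i ≤ ∑ k ∈ K', b k)
    (htot : ∑ i ∈ I, s i = ∑ k ∈ J, b k) :
    ∑ i ∈ I, s i ^ 2 ≤ ∑ k ∈ J, b k ^ 2 := by
  set N := ∑ i ∈ I, s i
  have hsN : ∀ i ∈ I, s i ≤ N := fun i hi => single_le_sum (fun _ _ => Nat.zero_le _) hi
  have hbN : ∀ k ∈ J, b k ≤ N := fun k hk => htot ▸ single_le_sum (fun _ _ => Nat.zero_le _) hk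
  have key : ∑ i ∈ I, s i * (s i + 1) ≤ ∑ k ∈ J, b k * (b k + 1) :=
    calc ∑ i ∈ I, s i * (s i + 1) = 2 * ∑ t ∈ range (N + 1), ∑ i ∈ I, (s i - t) := by
          rw [sum_comm, mul_sum]
          exact sum_congr rfl fun i hi => (two_mul_sum_range_tsub (hsN i hi)).symm
      _ ≤ 2 * ∑ t ∈ range (N + 1), ∑ k ∈ J, (b k - t) := by
          gcongr with t
          exact sum_tsub_le_sum_tsub_of_majorized I J hmaj t
      _ = ∑ k ∈ J, b k * (b k + 1) := by
          rw [sum_comm, mul_sum]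
          exact sum_congr rfl fun k hk => two_mul_sum_range_tsub (hbN k hk)
  simp only [mul_add, mul_one, sum_add_distrib, ← sq] at key
  omega

end Majorization

theorem two_mul_sum_lt_add_sum_sq {ι R : Type*} [LinearOrder ι] [CommSemiring R]
    (s : Finset ι) (g : ι → R) :
    2 * ∑ p ∈ (s ×ˢ s).filter (fun p => p.1 < p.2), g p.1 * g p.2 + ∑ i ∈ s, g i ^ 2 =
      (∑ i ∈ s, g i) ^ 2 := by
  have hlt : ∑ p ∈ (s ×ˢ s).filter (fun p => p.1 < p.2), g p.1 * g p.2 =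
      ∑ i ∈ s, ∑ j ∈ s, if i < j then g i * g j else 0 := by
    rw [sum_filter, sum_product]
  have hgt : ∑ p ∈ (s ×ˢ s).filter (fun p => p.1 < p.2), g p.1 * g p.2 =
      ∑ i ∈ s, ∑ j ∈ s, if j < i then g i * g j else 0 := by
    rw [hlt, sum_comm]
    simp only [mul_comm]
  have hdiag : ∑ i ∈ s, g i ^ 2 = ∑ i ∈ s, ∑ j ∈ s, if i = j then g i * g j else 0 :=
    sum_congr rfl fun i hi => by rw [sum_ite_eq, if_pos hi, sq]
  have htri : ∀ i j, ((if i < j then g i * g j else 0) + if j < i then g i * g j else 0) +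
      (if i = j then g i * g j else 0) = g i * g j := by
    intro i j
    rcases lt_trichotomy i j with h | rfl | h
    · simp [h, h.not_gt, h.ne]
    · simp
    · simp [h, h.not_gt, h.ne']
  rw [two_mul, hdiag]
  nth_rw 2 [hgt]
  rw [hlt, ← sum_add_distrib, ← sum_add_distrib, sq, sum_mul_sum]
  simp only [← sum_add_distrib, htri]

end Finset

theorem two_mul_prodSum {V : Type*} [Fintype V] (G : SimpleGraph V) [DecidableRel G.Adj]
    (f : V → ℕ) : 2 * prodSum G f = ∑ u, ∑ v, if G.Adj u v then f u * f v else 0 := by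
  classical
  have hdarts : ∑ d : G.Dart, f d.fst * f d.snd = 2 * prodSum G f := by
    calc ∑ d : G.Dart, f d.fst * f d.snd
        = ∑ e ∈ G.edgeFinset, ∑ d : G.Dart with d.edge = e, f d.fst * f d.snd :=
          (sum_fiberwise_of_maps_to (fun (d : G.Dart) _ => by
            rw [SimpleGraph.mem_edgeFinset]; exact d.edge_mem) _).symm
      _ = ∑ e ∈ G.edgeFinset, 2 * Sym2.lift ⟨fun u v => f u * f v, fun u v => mul_comm _ _⟩ e := by
          refine sum_congr rfl fun e he => ?_
          induction e with
          | _ u v =>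
            let d : G.Dart := ⟨(u, v), by simpa using he⟩
            rw [show ({d' : G.Dart | d'.edge = s(u, v)} : Finset _) = {d, d.symm} from
              d.edge_fiber, sum_pair d.symm_ne.symm]
            simp [d, mul_comm, mul_two]
      _ = 2 * prodSum G f := by rw [← mul_sum, prodSum]; convert rfl
  rw [← hdarts, ← Fintype.sum_prod_type', ← sum_filter]
  exact sum_bij' (fun d _ => (d.fst, d.snd)) (fun p hp => ⟨p, (mem_filter.1 hp).2⟩)
    (by simp) (by simp) (by simp) (by simp) (by simp)

theorem two_mul_prodSum_equiTuranGraph_add_sum_sq (r l : ℕ) (f : Fin r × Fin l → ℕ) :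
    2 * prodSum (equiTuranGraph r l) f + ∑ j, (∑ x, f (j, x)) ^ 2 = (∑ v, f v) ^ 2 := by
  classical
  have hrow (u : Fin r × Fin l) :
      ∑ v, (if u.1 = v.1 then f u * f v else 0) = f u * ∑ x, f (u.1, x) := by
    rw [Fintype.sum_prod_type, sum_eq_single u.1 (fun j _ hj => by simp [Ne.symm hj]) (by simp),
      mul_sum]
    simp
  have hdiag : ∑ j, (∑ x, f (j, x)) ^ 2 = ∑ u, ∑ v, if u.1 = v.1 then f u * f v else 0 := by
    simp only [hrow, Fintype.sum_prod_type, ← sum_mul, sq]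
  calc 2 * prodSum (equiTuranGraph r l) f + ∑ j, (∑ x, f (j, x)) ^ 2
      = ∑ u, ∑ v, ((if (equiTuranGraph r l).Adj u v then f u * f v else 0) +
          if u.1 = v.1 then f u * f v else 0) := by
        rw [two_mul_prodSum, hdiag, ← sum_add_distrib]
        simp only [sum_add_distrib]
    _ = ∑ u, ∑ v, f u * f v := by
        refine sum_congr rfl fun u _ => sum_congr rfl fun v _ => ?_
        by_cases h : u.1 = v.1 <;> simp [equiTuranGraph, h]
    _ = (∑ v, f v) ^ 2 := by rw [sq, sum_mul_sum]

namespace IsLabeling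

variable {V : Type*} [Fintype V] {f : V → ℕ}

theorem sum_eq (hf : IsLabeling V f) : ∑ v, f v = ∑ k ∈ Icc 1 (Fintype.card V), k :=
  sum_nbij f (fun v _ => by simpa using hf.mapsTo (Set.mem_univ v)) (by simpa using hf.injOn)
    (by simpa using hf.surjOn) (fun _ _ => rfl)

theorem sum_le_sum_range_tsub (hf : IsLabeling V f) (s : Finset V) :
    ∑ v ∈ s, f v ≤ ∑ n ∈ range #s, (Fintype.card V - n) := by
  classical
  have hinj : Set.InjOn f s := hf.injOn.mono (Set.subset_univ _)
  have h := Finset.sum_le_sum_range_tsub (s := s.image f) (c := Fintype.card V)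
    (by simpa using fun v _ => (hf.mapsTo (Set.mem_univ v)).2)
  rwa [sum_image hinj, card_image_of_injOn hinj] at h

end IsLabeling

theorem isLabeling_equiv_add_one {V : Type*} [Fintype V] {m : ℕ} (e : V ≃ Fin m) :
    IsLabeling V (fun v => (e v : ℕ) + 1) := by
  rw [IsLabeling, Fintype.card_congr e, Fintype.card_fin]
  refine ⟨fun v _ => by simp, fun u _ v _ h => e.injective (Fin.ext (by simpa using h)),
    fun k hk => by
      rw [Set.mem_Icc] at hk
      exact ⟨e.symm ⟨k - 1, by omega⟩, Set.mem_univ _,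
        by simp only [Equiv.apply_symm_apply]; omega⟩⟩

theorem minPS_eq_of_isLabeling {V : Type*} [Fintype V] {G : SimpleGraph V} {f₀ : V → ℕ} {m : ℕ}
    (hf₀ : IsLabeling V f₀) (h₀ : prodSum G f₀ = m)
    (hle : ∀ f, IsLabeling V f → m ≤ prodSum G f) : minPS G = m :=
  le_antisymm (Nat.sInf_le ⟨f₀, hf₀, h₀⟩)
    (le_csInf ⟨m, f₀, hf₀, h₀⟩ (by rintro _ ⟨f, hf, rfl⟩; exact hle f hf))

def blockSum (l j : ℕ) : ℕ := ∑ k ∈ Icc (j * l + 1) ((j + 1) * l), k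

theorem sum_Ico_blockSum (l : ℕ) {a b : ℕ} (hab : a ≤ b) :
    ∑ j ∈ Ico a b, blockSum l j = ∑ k ∈ Ioc (a * l) (b * l), k := by
  induction b, hab using Nat.le_induction with
  | base => simp
  | succ b hab ih =>
    rw [sum_Ico_succ_top hab, ih, blockSum, Icc_add_one_left_eq_Ioc]
    exact sum_Ioc_consecutive _ (Nat.mul_le_mul_right l hab) (Nat.mul_le_mul_right l b.le_succ)

theorem sum_range_blockSum (r l : ℕ) : ∑ j ∈ range r, blockSum l j = ∑ k ∈ Icc 1 (r * l), k := by
  rw [range_eq_Ico, sum_Ico_blockSum l (Nat.zero_le r), zero_mul, ← Icc_add_one_left_eq_Ioc,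
    zero_add]

theorem sum_finProdFinEquiv_add_one (r l : ℕ) (j : Fin r) :
    ∑ x : Fin l, ((finProdFinEquiv (j, x) : ℕ) + 1) = blockSum l j := by
  have hlen : (j + 1) * l + 1 - (j * l + 1) = l := by rw [add_mul]; omega
  rw [blockSum, ← Ico_add_one_right_eq_Icc, sum_Ico_eq_sum_range, hlen,
    ← Fin.sum_univ_eq_sum_range]
  exact sum_congr rfl fun x _ => by simp only [finProdFinEquiv, Equiv.coe_fn_mk]; ring

section Turan

variable {r l : ℕ} {f : Fin r × Fin l → ℕ}

theorem sum_sq_partSum_le_sum_sq_blockSum (hf : IsLabeling (Fin r × Fin l) f) :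
    ∑ j, (∑ x, f (j, x)) ^ 2 ≤ ∑ j ∈ range r, blockSum l j ^ 2 := by
  have hcard : Fintype.card (Fin r × Fin l) = r * l := by simp
  refine sum_sq_le_sum_sq_of_majorized univ (range r) (fun K _ => ?_) ?_
  · have hK : #K ≤ r := by simpa using card_le_univ K
    refine ⟨Ico (r - #K) r, fun j => by simp, by rw [Nat.card_Ico]; omega, ?_⟩
    calc ∑ j ∈ K, ∑ x, f (j, x) = ∑ v ∈ K ×ˢ univ, f v := (sum_product _ _ _).symm
      _ ≤ ∑ n ∈ range (#K * l), (r * l - n) := by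
        simpa [hcard] using hf.sum_le_sum_range_tsub (K ×ˢ univ)
      _ = ∑ k ∈ Ioc ((r - #K) * l) (r * l), k := by
        rw [sum_range_tsub_eq_sum_Ioc (Nat.mul_le_mul_right l hK), Nat.sub_mul]
      _ = ∑ j ∈ Ico (r - #K) r, blockSum l j := (sum_Ico_blockSum l (Nat.sub_le _ _)).symm
  · rw [← Fintype.sum_prod_type', hf.sum_eq, hcard, sum_range_blockSum]

theorem two_mul_prodSum_add_sum_sq_partSum_eq (hf : IsLabeling (Fin r × Fin l) f) :
    2 * prodSum (equiTuranGraph r l) f + ∑ j, (∑ x, f (j, x)) ^ 2 =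
      2 * ∑ p ∈ (range r ×ˢ range r).filter (fun p => p.1 < p.2),
          blockSum l p.1 * blockSum l p.2 + ∑ j ∈ range r, blockSum l j ^ 2 := by
  rw [two_mul_prodSum_equiTuranGraph_add_sum_sq, two_mul_sum_lt_add_sum_sq, hf.sum_eq,
    sum_range_blockSum]
  simp

end Turan

theorem minPS_equiTuranGraph (r l : ℕ) :
    minPS (equiTuranGraph r l) =
      ∑ p ∈ (range r ×ˢ range r).filter (fun p => p.1 < p.2), blockSum l p.1 * blockSum l p.2 := by
  have hf₀ := isLabeling_equiv_add_one (finProdFinEquiv (m := r) (n := l))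
  refine minPS_eq_of_isLabeling hf₀ ?_ fun f hf => ?_
  · have h := two_mul_prodSum_add_sum_sq_partSum_eq hf₀
    simp only [sum_finProdFinEquiv_add_one] at h
    rw [Fin.sum_univ_eq_sum_range (fun j => blockSum l j ^ 2)] at h
    omega
  · have h := two_mul_prodSum_add_sum_sq_partSum_eq hf
    have hsq := sum_sq_partSum_le_sum_sq_blockSum hf
    omega

theorem statement7_general (n r : ℕ) :
    minPS (equiTuranGraph r (n / r)) =
      ∑ p ∈ (Finset.range r ×ˢ Finset.range r).filter (fun p => p.1 < p.2),
        (∑ k ∈ Finset.Icc (p.1 * (n / r) + 1) ((p.1 + 1) * (n / r)), k) *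
          (∑ k ∈ Finset.Icc (p.2 * (n / r) + 1) ((p.2 + 1) * (n / r)), k) :=
  minPS_equiTuranGraph r (n / r)

/-- For `r ≥ 2` and `r ∣ n`, the MinPS of the Turán graph `T(n,r)` equals
`Σ_{1 ≤ j < j' ≤ r} S_j · S_{j'}`, where `S_j` is the sum of the `j`-th consecutive block of
`n/r` integers in `{1,…,n}` (here parts are indexed by `j = 0,…,r−1`, and
`S_j = Σ_{k = j·(n/r)+1}^{(j+1)·(n/r)} k`). -/
theorem statement7 (n r : ℕ) (hr : 2 ≤ r) (hdvd : r ∣ n) :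
    minPS (equiTuranGraph r (n / r)) =
      ∑ p ∈ (Finset.range r ×ˢ Finset.range r).filter (fun p => p.1 < p.2),
        (∑ k ∈ Finset.Icc (p.1 * (n / r) + 1) ((p.1 + 1) * (n / r)), k) *
          (∑ k ∈ Finset.Icc (p.2 * (n / r) + 1) ((p.2 + 1) * (n / r)), k) :=
  statement7_general n r
end

section
/- For every integer θ ≥ 3, M(C_{θ+2}) ≥ M(C_θ) + θ² + 4θ + 5. -/
open Finset

/-!
The MinPS of `C_m` is exactly `m(m+1)(m+2)/6 + ⌊(m+1)/2⌋ - 1`, and this value grows by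
`m² + 4m + 5` from `m` to `m + 2`.

Lower bound: `f u * f v = ∑_{s,t<m} [s < f u][t < f v]`, so the product sum counts, for each
`(s, t)`, the edges `(i, i+1)` with `f i > s` and `f (i+1) > t`. By inclusion–exclusion there are
at least `m - s - t` of them, which sums to `m(m+1)(m+2)/6`. When `s + t = m` with `0 < s < t`,
some edge joins a label `> s` to a label `> t`: otherwise the `s` vertices labelled above `t`
have all their neighbours among the `s` vertices labelled at most `s`, which forces them to be
every second vertex of the cycle. Summing over these `s` gives the extra `⌊(m+1)/2⌋ - 1`.

Upper bound: reflecting the labels of an optimal labeling of `C_m` by `x ↦ m + 2 - x` and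
closing the resulting path with the labels `1` and `m + 2` gives a labeling of `C_{m+2}` that
attains the formula.
-/

def sixMinPSCycle (m : ℕ) : ℕ := m * (m + 1) * (m + 2) + 6 * ((m + 1) / 2 - 1)

lemma sixMinPSCycle_add_two {m : ℕ} (hm : 1 ≤ m) :
    sixMinPSCycle (m + 2) = sixMinPSCycle m + 6 * (m ^ 2 + 4 * m + 5) := by
  rw [sixMinPSCycle, sixMinPSCycle, show (m + 2 + 1) / 2 - 1 = (m + 1) / 2 - 1 + 1 by omega]
  ring

namespace SimpleGraph

-- For an arbitrary `Fintype` instance, since `prodSum` uses a classical one.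
lemma cycleGraph_edgeFinset {n : ℕ} {_ : Fintype (cycleGraph (n + 2)).edgeSet} :
    (cycleGraph (n + 2)).edgeFinset = univ.image fun i : Fin (n + 2) => s(i, i + 1) := by
  ext e
  induction e with
  | _ u v =>
    simp only [mem_edgeFinset, mem_edgeSet, cycleGraph_adj, mem_image, mem_univ, true_and,
      Sym2.eq_iff, sub_eq_iff_eq_add']
    grind

open Fin.CommRing in
lemma injective_cycleGraph_edge {n : ℕ} [NeZero n] (hn : 3 ≤ n) :
    Function.Injective fun i : Fin n => s(i, i + 1) := by
  intro i j h
  rcases Sym2.eq_iff.mp h with ⟨hij, -⟩ | ⟨hij, hji⟩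
  · exact hij
  · have : (2 : Fin n) = 0 := by linear_combination hji - hij
    simp [Fin.ext_iff, Nat.mod_eq_of_lt (show 2 < n by omega)] at this

end SimpleGraph

lemma prodSum_cycleGraph {n : ℕ} [NeZero n] (hn : 3 ≤ n) (f : Fin n → ℕ) :
    prodSum (SimpleGraph.cycleGraph n) f = ∑ i : Fin n, f i * f (i + 1) := by
  obtain ⟨n, rfl⟩ : ∃ k, n = k + 2 := ⟨n - 2, by omega⟩
  rw [prodSum, SimpleGraph.cycleGraph_edgeFinset,
    sum_image fun i _ j _ h => SimpleGraph.injective_cycleGraph_edge hn h]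
  rfl

lemma sum_mul_eq_sum_range_card_filter_lt {ι : Type*} [Fintype ι] {n : ℕ} (a b : ι → ℕ)
    (ha : ∀ i, a i ≤ n) (hb : ∀ i, b i ≤ n) :
    ∑ i, a i * b i = ∑ s ∈ range n, ∑ t ∈ range n, #{i | s < a i ∧ t < b i} := by
  have card_lt : ∀ k ≤ n, #{s ∈ range n | s < k} = k := fun k hk => by
    rw [show {s ∈ range n | s < k} = range k by ext; simp; omega, card_range]
  calc ∑ i, a i * b i
      = ∑ i, (∑ s ∈ range n, if s < a i then 1 else 0) *
          ∑ t ∈ range n, if t < b i then 1 else 0 := by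
        simp only [sum_boole, card_lt _ (ha _), card_lt _ (hb _), Nat.cast_id]
    _ = ∑ i, ∑ s ∈ range n, ∑ t ∈ range n, if s < a i ∧ t < b i then 1 else 0 := by
        simp only [sum_mul_sum, ite_zero_mul_ite_zero, mul_one]
    _ = _ := by
        rw [sum_comm]
        refine sum_congr rfl fun s _ => ?_
        rw [sum_comm]
        simp only [sum_boole, Nat.cast_id]

section Labeling

variable {V : Type*} [Fintype V] {f : V → ℕ}

lemma IsLabeling.card_filter_lt (hf : IsLabeling V f) (s : ℕ) :
    #{x | s < f x} = Fintype.card V - s := by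
  rw [← Nat.card_Ioc]
  refine card_nbij f (fun x hx => ?_) (hf.injOn.mono fun _ _ => trivial) fun v hv => ?_
  · simp only [coe_filter, mem_univ, true_and] at hx
    simpa using ⟨hx, (hf.mapsTo (Set.mem_univ x)).2⟩
  · simp only [coe_Ioc, Set.mem_Ioc] at hv
    obtain ⟨x, -, rfl⟩ := hf.surjOn ⟨by omega, hv.2⟩
    exact ⟨x, by simpa using hv.1, rfl⟩

lemma IsLabeling.comp_bijective (hf : IsLabeling V f) {g : V → V} (hg : g.Bijective) :
    IsLabeling V (f ∘ g) :=
  hf.comp (Set.bijOn_univ.2 hg)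

lemma IsLabeling.card_sub_sub_le_card_filter (hf : IsLabeling V f) {g : V → V}
    (hg : g.Bijective) (s t : ℕ) : Fintype.card V - s - t ≤ #{x | s < f x ∧ t < f (g x)} := by
  classical
  have hs := hf.card_filter_lt s
  have ht := (hf.comp_bijective hg).card_filter_lt t
  have := card_inter_add_card_union {x | s < f x} {x | t < (f ∘ g) x}
  have := card_le_univ (({x | s < f x} : Finset V) ∪ ({x | t < (f ∘ g) x} : Finset V))
  rw [filter_and]
  simp only [Function.comp_apply] at *
  omega

end Labeling

lemma two_mul_sum_range_sub {k n : ℕ} (hk : k ≤ n) :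
    2 * ∑ t ∈ range n, (k - t) = k * (k + 1) := by
  have h₁ : ∑ t ∈ range n, (k - t) = ∑ t ∈ range k, (k - t) :=
    (sum_subset (range_subset_range.2 hk) fun t _ ht => by simp at ht; omega).symm
  have h₂ : ∑ t ∈ range k, (k - t) = ∑ t ∈ range (k + 1), t := by
    rw [sum_range_succ', ← sum_range_reflect]
    exact sum_congr rfl fun t ht => by simp at ht; omega
  rw [h₁, h₂, mul_comm, sum_range_id_mul_two, Nat.add_sub_cancel, mul_comm]

lemma three_mul_sum_range_succ_mul_succ_succ (m : ℕ) :
    3 * ∑ j ∈ range m, (j + 1) * (j + 2) = m * (m + 1) * (m + 2) := by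
  induction m with
  | zero => simp
  | succ m ih => rw [sum_range_succ, mul_add, ih]; ring

lemma six_mul_sum_range_sum_range_sub (m : ℕ) :
    6 * ∑ s ∈ range m, ∑ t ∈ range m, (m - s - t) = m * (m + 1) * (m + 2) := by
  calc 6 * ∑ s ∈ range m, ∑ t ∈ range m, (m - s - t)
      = 3 * ∑ s ∈ range m, (m - 1 - s + 1) * (m - 1 - s + 2) := by
        rw [mul_sum, mul_sum]
        refine sum_congr rfl fun s hs => ?_
        rw [show 6 = 3 * 2 by rfl, mul_assoc, two_mul_sum_range_sub (Nat.sub_le m s)]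
        simp at hs
        congr 2 <;> omega
    _ = m * (m + 1) * (m + 2) := by
        rw [sum_range_reflect (fun j => (j + 1) * (j + 2)) m,
          three_mul_sum_range_succ_mul_succ_succ]

lemma card_filter_pos_two_mul_ne (m : ℕ) :
    #{s ∈ range m | 0 < s ∧ 2 * s ≠ m} = 2 * ((m + 1) / 2 - 1) := by
  rcases Nat.even_or_odd' m with ⟨k, rfl | rfl⟩
  · rcases Nat.eq_zero_or_pos k with rfl | hk
    · rfl
    rw [show {s ∈ range (2 * k) | 0 < s ∧ 2 * s ≠ 2 * k} = (Ioo 0 (2 * k)).erase k by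
      ext s; simp; omega, card_erase_of_mem (by simp; omega), Nat.card_Ioo]
    omega
  · rw [show {s ∈ range (2 * k + 1) | 0 < s ∧ 2 * s ≠ 2 * k + 1} = Ioo 0 (2 * k + 1) by
      ext s; simp; omega, Nat.card_Ioo]
    omega

lemma sum_range_sum_range_ite_eq_sub (m : ℕ) :
    ∑ s ∈ range m, ∑ t ∈ range m, (if t = m - s ∧ 0 < s ∧ 2 * s ≠ m then 1 else 0) =
      2 * ((m + 1) / 2 - 1) := by
  rw [← card_filter_pos_two_mul_ne, card_filter]
  refine sum_congr rfl fun s hs => ?_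
  simp only [ite_and, sum_ite_eq', mem_range]
  simp at hs
  split_ifs <;> omega

lemma add_add_mem_of_image_subset {G : Type*} [AddGroup G] [DecidableEq G] {A B : Finset G}
    {a : G} (hadd : A.image (· + a) ⊆ B) (hsub : A.image (· - a) ⊆ B) (hBA : #B ≤ #A)
    {x : G} (hx : x ∈ A) : x + a + a ∈ A := by
  have hB : A.image (· - a) = B :=
    eq_of_subset_of_card_le hsub (by rwa [card_image_of_injective _ sub_left_injective])
  obtain ⟨y, hy, hyx⟩ := mem_image.1 (hB ▸ hadd (mem_image_of_mem _ hx))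
  exact sub_eq_iff_eq_add.1 hyx ▸ hy

open Fin.CommRing in
lemma Fin.le_card_of_add_two_mem {m : ℕ} [NeZero m] {A : Finset (Fin m)} (hA : A.Nonempty)
    (h : ∀ x ∈ A, x + 1 + 1 ∈ A) : (m + 1) / 2 ≤ #A := by
  obtain ⟨x₀, hx₀⟩ := hA
  have hmem : ∀ k : ℕ, x₀ + (2 * k : ℕ) ∈ A := by
    intro k
    induction k with
    | zero => simpa using hx₀
    | succ k ih => convert h _ ih using 1; push_cast; ring
  calc (m + 1) / 2 = #(range ((m + 1) / 2)) := (card_range _).symm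
    _ ≤ #A := by
      refine card_le_card_of_injOn _ (fun k _ => hmem k) fun k₁ hk₁ k₂ hk₂ heq => ?_
      simp only [coe_range, Set.mem_Iio] at hk₁ hk₂
      have := congrArg Fin.val (add_left_cancel heq)
      simp only [Fin.val_natCast, Nat.mod_eq_of_lt (show 2 * k₁ < m by omega),
        Nat.mod_eq_of_lt (show 2 * k₂ < m by omega)] at this
      omega

section LowerBound

variable {m : ℕ} [NeZero m] {f : Fin m → ℕ}

open Fin.CommRing in
lemma IsLabeling.exists_lt_and_sub_lt (hf : IsLabeling (Fin m) f) {s : ℕ} (hs : 0 < s)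
    (hsm : 2 * s < m) :
    ∃ i, (s < f i ∧ m - s < f (i + 1)) ∨ (m - s < f i ∧ s < f (i + 1)) := by
  by_contra! hcon
  set A : Finset (Fin m) := {x | m - s < f x}
  set B : Finset (Fin m) := {x | f x ≤ s}
  have hA : #A = s := by
    rw [hf.card_filter_lt, Fintype.card_fin]; omega
  have hB : #B = s := by
    change #{x | f x ≤ s} = s
    have := card_filter_add_card_filter_not (s := univ) (fun x => s < f x)
    simp only [not_lt, hf.card_filter_lt, card_univ, Fintype.card_fin] at this
    omega
  have hadd : A.image (· + 1) ⊆ B := by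
    simp only [subset_iff, mem_image, forall_exists_index, and_imp, forall_apply_eq_imp_iff₂]
    intro x hx
    simp only [A, B, mem_filter, mem_univ, true_and] at hx ⊢
    exact (hcon x).2 hx
  have hsub : A.image (· - 1) ⊆ B := by
    simp only [subset_iff, mem_image, forall_exists_index, and_imp, forall_apply_eq_imp_iff₂]
    intro x hx
    simp only [A, B, mem_filter, mem_univ, true_and] at hx ⊢
    by_contra! hlt
    have := (hcon (x - 1)).1 hlt
    rw [sub_add_cancel] at this
    omega
  have := Fin.le_card_of_add_two_mem (card_pos.1 (hA ▸ hs))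
    fun x hx => add_add_mem_of_image_subset hadd hsub (hA ▸ hB ▸ le_rfl) hx
  omega

lemma IsLabeling.two_mul_sub_sub_add_ite_le (hf : IsLabeling (Fin m) f) {s : ℕ} (hsm : s < m)
    (t : ℕ) :
    2 * (m - s - t) + (if t = m - s ∧ 0 < s ∧ 2 * s ≠ m then 1 else 0) ≤
      #{i | s < f i ∧ t < f (i + 1)} + #{i | t < f i ∧ s < f (i + 1)} := by
  split_ifs with h
  · obtain ⟨rfl, hs, hsm'⟩ := h
    suffices ∃ i, (s < f i ∧ m - s < f (i + 1)) ∨ (m - s < f i ∧ s < f (i + 1)) by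
      obtain ⟨i, hi | hi⟩ := this
      · have : 0 < #{i | s < f i ∧ m - s < f (i + 1)} := card_pos.2 ⟨i, by simpa using hi⟩
        omega
      · have : 0 < #{i | m - s < f i ∧ s < f (i + 1)} := card_pos.2 ⟨i, by simpa using hi⟩
        omega
    rcases lt_or_gt_of_ne hsm' with hsm' | hsm'
    · exact hf.exists_lt_and_sub_lt hs hsm'
    · obtain ⟨i, hi⟩ := hf.exists_lt_and_sub_lt (s := m - s) (by omega) (by omega)
      exact ⟨i, by rwa [Nat.sub_sub_self hsm.le, or_comm] at hi⟩
  · have hsucc : Function.Bijective fun i : Fin m => i + 1 := (Equiv.addRight 1).bijective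
    have hst := hf.card_sub_sub_le_card_filter hsucc s t
    have hts := hf.card_sub_sub_le_card_filter hsucc t s
    rw [Fintype.card_fin] at hst hts
    omega

lemma IsLabeling.sixMinPSCycle_le (hf : IsLabeling (Fin m) f) :
    sixMinPSCycle m ≤ 6 * ∑ i, f i * f (i + 1) := by
  have hfm : ∀ i, f i ≤ m := fun i => by simpa using (hf.mapsTo (Set.mem_univ i)).2
  rw [sum_mul_eq_sum_range_card_filter_lt f (fun i => f (i + 1)) hfm fun i => hfm _]
  have hpair := sum_le_sum fun s hs => sum_le_sum (s := range m) fun t _ =>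
    hf.two_mul_sub_sub_add_ite_le (mem_range.1 hs) t
  simp only [sum_add_distrib, ← mul_sum, sum_range_sum_range_ite_eq_sub] at hpair
  rw [sum_comm (f := fun s t => #{i | t < f i ∧ s < f (i + 1)})] at hpair
  have := six_mul_sum_range_sum_range_sub m
  unfold sixMinPSCycle
  omega

end LowerBound

/-- Vertex `i` of `C_m` gets label `cycleLabel m i`; around `C_6` this reads `1, 5, 3, 4, 2, 6`. -/
def cycleLabel : ℕ → ℕ → ℕ
  | 0 => fun _ => 0
  | 1 => fun _ => 1
  | m + 2 => fun i => if i = 0 then 1 else if i ≤ m then m + 2 - cycleLabel m (i - 1) else m + 2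

/-- The product sum of the cycle `g 0, g 1, …, g n`, which has `n + 1` vertices. -/
def cyclicProdSum (g : ℕ → ℕ) (n : ℕ) : ℕ :=
  ∑ i ∈ range n, g i * g (i + 1) + g n * g 0

lemma sum_fin_mul_add_one_eq_cyclicProdSum (g : ℕ → ℕ) (n : ℕ) :
    ∑ i : Fin (n + 1), g i * g ↑(i + 1) = cyclicProdSum g n := by
  rw [Fin.sum_univ_castSucc, Fin.last_add_one]
  simp only [Fin.coeSucc_eq_succ, Fin.val_castSucc, Fin.val_succ, Fin.val_last, Fin.val_zero]
  rw [Fin.sum_univ_eq_sum_range (fun i => g i * g (i + 1)), cyclicProdSum]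

lemma cycleLabel_add_two (m i : ℕ) : cycleLabel (m + 2) i =
    if i = 0 then 1 else if i ≤ m then m + 2 - cycleLabel m (i - 1) else m + 2 := by
  rw [cycleLabel]

lemma cycleLabel_add_two_succ {m i : ℕ} (hi : i < m) :
    cycleLabel (m + 2) (i + 1) = m + 2 - cycleLabel m i := by
  rw [cycleLabel_add_two, if_neg i.succ_ne_zero, if_pos (show i + 1 ≤ m from hi),
    Nat.add_sub_cancel]

lemma cycleLabel_zero (n : ℕ) : cycleLabel (n + 1) 0 = 1 := by
  cases n <;> simp [cycleLabel]

lemma cycleLabel_self (n : ℕ) : cycleLabel (n + 1) n = n + 1 := by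
  cases n <;> simp [cycleLabel]

lemma bijOn_cycleLabel : ∀ m, Set.BijOn (cycleLabel m) (Set.Iio m) (Set.Icc 1 m)
  | 0 => by simp
  | 1 => by simp [cycleLabel, Set.BijOn, Set.MapsTo, Set.InjOn, Set.SurjOn]
  | m + 2 => by
    obtain ⟨hmaps, hinj, hsurj⟩ := bijOn_cycleLabel m
    have hbound : ∀ i < m, 1 ≤ cycleLabel m i ∧ cycleLabel m i ≤ m := fun i hi => hmaps hi
    refine ⟨fun i hi => ?_, fun i hi j hj hij => ?_, fun v hv => ?_⟩
    · simp only [Set.mem_Iio, Set.mem_Icc] at hi ⊢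
      rw [cycleLabel_add_two]
      split_ifs
      · omega
      · have := hbound (i - 1) (by omega); omega
      · omega
    · simp only [Set.mem_Iio] at hi hj
      rw [cycleLabel_add_two, cycleLabel_add_two] at hij
      split_ifs at hij with hi₀ hi₁ hj₀ hj₁ hj₀ hj₁ <;>
        first
        | omega
        | have := hbound (i - 1) (by omega); omega
        | have := hbound (j - 1) (by omega); omega
        | have := hbound (i - 1) (by omega); have := hbound (j - 1) (by omega)
          have := hinj (show i - 1 < m by omega) (show j - 1 < m by omega) (by omega)
          omega
    · simp only [Set.mem_Icc] at hv
      by_cases hv₁ : v = 1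
      · exact ⟨0, by simp, by simp [cycleLabel_add_two, hv₁]⟩
      by_cases hv₂ : v = m + 2
      · exact ⟨m + 1, by simp, by simp [cycleLabel_add_two, hv₂]⟩
      obtain ⟨j, hj, hjv⟩ := hsurj (show m + 2 - v ∈ Set.Icc 1 m by simp; omega)
      simp only [Set.mem_Iio] at hj
      refine ⟨j + 1, by simp; omega, ?_⟩
      rw [cycleLabel_add_two_succ hj, hjv]
      omega

lemma cycleLabel_le {m i : ℕ} (hi : i < m) : cycleLabel m i ≤ m :=
  ((bijOn_cycleLabel m).mapsTo hi).2

lemma two_mul_sum_range_cycleLabel (m : ℕ) :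
    2 * ∑ i ∈ range m, cycleLabel m i = m * (m + 1) := by
  obtain ⟨hmaps, hinj, hsurj⟩ := bijOn_cycleLabel m
  rw [sum_nbij (f := cycleLabel m) (t := Icc 1 m) (g := id) (cycleLabel m)
    (fun i hi => by simpa using hmaps (by simpa using hi)) (by simpa using hinj)
    (by simpa using hsurj) fun _ _ => rfl]
  clear hmaps hinj hsurj
  induction m with
  | zero => rfl
  | succ m ih => rw [sum_Icc_succ_top (by omega), mul_add, ih, id]; ring

lemma cyclicProdSum_cycleLabel_add_two (n : ℕ) :
    cyclicProdSum (cycleLabel (n + 3)) (n + 2) =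
      cyclicProdSum (cycleLabel (n + 1)) n + ((n + 1) ^ 2 + 4 * (n + 1) + 5) := by
  set f := cycleLabel (n + 1)
  set g := cycleLabel (n + 1 + 2)
  have hf₀ : f 0 = 1 := cycleLabel_zero n
  have hfn : f n = n + 1 := cycleLabel_self n
  have hg₀ : g 0 = 1 := cycleLabel_zero (n + 2)
  have hgl : g (n + 1 + 1) = n + 3 := cycleLabel_self (n + 2)
  have hgf : ∀ i ≤ n, (g (i + 1) : ℤ) = n + 3 - f i := fun i hi => by
    have : f i ≤ n + 1 := cycleLabel_le (by omega)
    rw [show g (i + 1) = n + 1 + 2 - f i from cycleLabel_add_two_succ (by omega),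
      Nat.cast_sub (by omega)]
    push_cast
    ring
  have hpath : ∑ i ∈ range n, (g (i + 1) : ℤ) * g (i + 1 + 1) =
      ∑ i ∈ range n,
        (((n : ℤ) + 3) ^ 2 - (n + 3) * f i - (n + 3) * f (i + 1) + f i * f (i + 1)) :=
    sum_congr rfl fun i hi => by
      rw [mem_range] at hi
      rw [hgf i (by omega), hgf (i + 1) (by omega)]
      ring
  have hS : 2 * ∑ i ∈ range (n + 1), (f i : ℤ) = (n + 1) * (n + 2) := by
    exact_mod_cast two_mul_sum_range_cycleLabel (n + 1)
  have hS₁ : 2 * (∑ i ∈ range n, (f i : ℤ) + (n + 1)) = (n + 1) * (n + 2) := by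
    rw [← hS, sum_range_succ, hfn]
    push_cast
    rfl
  have hS₂ : 2 * (∑ i ∈ range n, (f (i + 1) : ℤ) + 1) = (n + 1) * (n + 2) := by
    rw [← hS, sum_range_succ', hf₀]
    push_cast
    rfl
  simp only [sum_add_distrib, sum_sub_distrib, ← mul_sum, sum_const, card_range,
    nsmul_eq_mul] at hpath
  zify
  rw [cyclicProdSum, cyclicProdSum, sum_range_succ', sum_range_succ]
  push_cast
  rw [hpath, hgf 0 (Nat.zero_le n), hgf n le_rfl, hgl, hg₀, hf₀, hfn]
  push_cast
  refine mul_left_cancel₀ (two_ne_zero (α := ℤ)) ?_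
  linear_combination (-(n : ℤ) - 3) * (hS₁ + hS₂)

lemma six_mul_cyclicProdSum_cycleLabel :
    ∀ n, 6 * cyclicProdSum (cycleLabel (n + 1)) n = sixMinPSCycle (n + 1)
  | 0 => rfl
  | 1 => rfl
  | n + 2 => by
    rw [cyclicProdSum_cycleLabel_add_two, mul_add, six_mul_cyclicProdSum_cycleLabel n,
      sixMinPSCycle_add_two (m := n + 1) (by omega)]

lemma exists_isLabeling_six_mul_prodSum_cycleGraph {m : ℕ} (hm : 3 ≤ m) :
    ∃ f, IsLabeling (Fin m) f ∧ 6 * prodSum (SimpleGraph.cycleGraph m) f = sixMinPSCycle m := by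
  obtain ⟨n, rfl⟩ : ∃ n, m = n + 1 := ⟨m - 1, by omega⟩
  have hval : Set.BijOn (Fin.val : Fin (n + 1) → ℕ) Set.univ (Set.Iio (n + 1)) :=
    ⟨fun i _ => i.isLt, Fin.val_injective.injOn, fun v hv => ⟨⟨v, hv⟩, trivial, rfl⟩⟩
  refine ⟨fun i => cycleLabel (n + 1) i, ?_, ?_⟩
  · rw [IsLabeling, Fintype.card_fin]
    exact (bijOn_cycleLabel (n + 1)).comp hval
  · rw [prodSum_cycleGraph hm, sum_fin_mul_add_one_eq_cyclicProdSum,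
      six_mul_cyclicProdSum_cycleLabel]

lemma six_mul_minPS_cycleGraph {m : ℕ} (hm : 3 ≤ m) :
    6 * minPS (SimpleGraph.cycleGraph m) = sixMinPSCycle m := by
  have : NeZero m := ⟨by omega⟩
  obtain ⟨f₀, hf₀, hval⟩ := exists_isLabeling_six_mul_prodSum_cycleGraph hm
  have hmin : minPS (SimpleGraph.cycleGraph m) = prodSum (SimpleGraph.cycleGraph m) f₀ := by
    refine IsLeast.csInf_eq ⟨⟨f₀, hf₀, rfl⟩, ?_⟩
    rintro _ ⟨f, hf, rfl⟩
    have := hf.sixMinPSCycle_le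
    rw [← prodSum_cycleGraph hm] at this
    omega
  rw [hmin, hval]

/-- For every `θ ≥ 3`, `M(C_{θ+2}) ≥ M(C_θ) + θ² + 4θ + 5`. -/
theorem statement9 (θ : ℕ) (hθ : 3 ≤ θ) :
    minPS (SimpleGraph.cycleGraph θ) + θ ^ 2 + 4 * θ + 5 ≤
      minPS (SimpleGraph.cycleGraph (θ + 2)) := by
  have h := six_mul_minPS_cycleGraph hθ
  have h₂ := six_mul_minPS_cycleGraph (m := θ + 2) (by omega)
  rw [sixMinPSCycle_add_two (by omega)] at h₂
  linarith
end

section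
/- For every integer θ ≥ 3, there exists a bijection σ from the edge set of the cycle C_θ to {1,…,θ} that is simultaneously optimal for both the MaxMinSum and the MinVar problems: for every bijection σ' from the edges of C_θ to {1,…,θ}, one has min_{v} p_v(σ) ≥ min_{v} p_v(σ') and Var(σ) ≤ Var(σ'). -/
/-!
Write `a i` for the label of the edge `{i, i + 1}` of `C_θ`, so that vertex `v` has popularity
`a (v - 1) + a v`. The integer deviations `d v = p_v - (θ + 1)` satisfy
`d (v + 1) - d v = a (v + 1) - a (v - 1)`, hence `Var = ∑ d² ≥ ∑ |d| ≥ ½ ∑ |a (i + 2) - a i|`.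
The step `i ↦ i + 2` runs around one closed loop of length `θ` when `θ` is odd and two loops of
length `θ / 2` when `θ` is even; an injective sequence around a closed loop of length `m` has
total variation at least `2 (m - 1)`, so `Var ≥ θ - 1`, resp. `θ - 2`. Zigzag labellings
`1, θ - 1, 3, θ - 3, …` have all deviations in `{-1, 0, 1}` with exactly one, resp. two, zeros:
they attain this bound and all their popularities are at least `θ`. No labelling does better
for the minimum popularity, because both ends of the edge labelled `1` reach `θ + 1` only if
both neighbouring edges carry the label `θ`.
-/

open Finset

/-- The popularity of vertex `v` under an edge labeling `σ`: the sum of the labels of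
the edges of `G` incident to `v`. -/
noncomputable def popularity {V : Type*} [Fintype V] (G : SimpleGraph V) (σ : Sym2 V → ℕ)
    (v : V) : ℕ := by
  classical
  exact ∑ e ∈ G.edgeFinset.filter (fun e => v ∈ e), σ e

/-- An edge labeling of `G`: a bijection from the edge set of `G` onto `{1,…,θ}`,
where `θ` is the number of edges of `G`. -/
def IsEdgeLabeling {V : Type*} (G : SimpleGraph V) (σ : Sym2 V → ℕ) : Prop :=
  Set.BijOn σ G.edgeSet (Set.Icc 1 (Nat.card G.edgeSet))

open Function

theorem abs_sub_le_sum_Ico_abs_sub {α : Type*} [AddCommGroup α] [LinearOrder α]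
    [IsOrderedAddMonoid α] (F : ℕ → α) {i j : ℕ} (hij : i ≤ j) :
    |F j - F i| ≤ ∑ k ∈ Ico i j, |F (k + 1) - F k| := by
  rw [← sum_Ico_sub F hij]
  exact abs_sum_le_sum_abs _ _

theorem two_mul_abs_sub_le_sum_range_abs_sub {α : Type*} [CommRing α] [LinearOrder α]
    [IsStrictOrderedRing α] {F : ℕ → α} {N : ℕ} (hF : F N = F 0) {i j : ℕ} (hi : i ≤ N)
    (hj : j ≤ N) :
    2 * |F j - F i| ≤ ∑ k ∈ range N, |F (k + 1) - F k| := by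
  wlog hij : i ≤ j generalizing i j
  · rw [abs_sub_comm]
    exact this hj hi (le_of_not_ge hij)
  have hback : |F j - F i| ≤ |F i - F 0| + |F N - F j| := by
    rw [hF, abs_sub_comm (F i), abs_sub_comm (F 0) (F j), add_comm]
    exact abs_sub_le (F j) (F 0) (F i)
  rw [range_eq_Ico, ← sum_Ico_consecutive _ (Nat.zero_le i) (hij.trans hj),
    ← sum_Ico_consecutive _ hij hj]
  linarith [abs_sub_le_sum_Ico_abs_sub F (Nat.zero_le i), abs_sub_le_sum_Ico_abs_sub F hij,
    abs_sub_le_sum_Ico_abs_sub F hj]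

theorem Finset.card_sub_one_le_max'_sub_min' (s : Finset ℤ) (hs : s.Nonempty) :
    (#s : ℤ) - 1 ≤ s.max' hs - s.min' hs := by
  have hsub : s ⊆ Icc (s.min' hs) (s.max' hs) :=
    fun x hx => mem_Icc.2 ⟨min'_le s x hx, le_max' s x hx⟩
  have hcard := card_le_card hsub
  rw [Int.card_Icc] at hcard
  have := hs.card_pos
  omega

theorem two_mul_sub_one_le_sum_range_abs_sub {F : ℕ → ℤ} {m : ℕ} (hF : F m = F 0)
    (hinj : Set.InjOn F (range m)) :
    2 * ((m : ℤ) - 1) ≤ ∑ k ∈ range m, |F (k + 1) - F k| := by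
  rcases m.eq_zero_or_pos with rfl | hm
  · simp
  have hs : ((range m).image F).Nonempty := by simpa using hm.ne'
  obtain ⟨j, hj, hFj⟩ := mem_image.1 (max'_mem _ hs)
  obtain ⟨i, hi, hFi⟩ := mem_image.1 (min'_mem _ hs)
  have hspread := card_sub_one_le_max'_sub_min' _ hs
  rw [card_image_of_injOn hinj, card_range, ← hFj, ← hFi] at hspread
  have := two_mul_abs_sub_le_sum_range_abs_sub hF (mem_range.1 hi).le (mem_range.1 hj).le
  linarith [le_abs_self (F j - F i)]

theorem Finset.sum_range_two_mul {M : Type*} [AddCommMonoid M] (f : ℕ → M) (m : ℕ) :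
    ∑ k ∈ range (2 * m), f k = ∑ k ∈ range m, (f (2 * k) + f (2 * k + 1)) := by
  induction m with
  | zero => simp
  | succ m ih => rw [Nat.mul_succ, sum_range_succ, sum_range_succ, sum_range_succ, ih, add_assoc]

section StepTwo

open Fin.CommRing

variable {N : ℕ} [NeZero N]

theorem Fin.sum_univ_eq_sum_range_natCast {M : Type*} [AddCommMonoid M] (g : Fin N → M) :
    ∑ i, g i = ∑ k ∈ range N, g k := by
  rw [← Fin.sum_univ_eq_sum_range (fun k => g k)]
  simp

theorem Fin.sub_one_ne_add_one (hN : 2 < N) (v : Fin N) : v - 1 ≠ v + 1 := by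
  intro h
  have h2 : ((2 : ℕ) : Fin N) = 0 := by linear_combination -h
  rw [Fin.natCast_eq_zero] at h2
  exact absurd (Nat.le_of_dvd two_pos h2) (by omega)

/-- For odd `N`, `k ↦ 2 k` walks once around `Fin N`. -/
theorem two_mul_sub_one_le_sum_abs_sub_of_odd (hN : Odd N) {a : Fin N → ℤ} (ha : Injective a) :
    2 * ((N : ℤ) - 1) ≤ ∑ i, |a (i + 2) - a i| := by
  set φ : ℕ → Fin N := fun k => ((2 * k : ℕ) : Fin N)
  have hφ : Set.InjOn φ (range N) := by
    intro k hk l hl h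
    have hmod : 2 * k ≡ 2 * l [MOD N] := by
      unfold Nat.ModEq
      simpa only [φ, Fin.val_natCast] using congrArg Fin.val h
    exact Nat.ModEq.eq_of_lt_of_lt (Nat.ModEq.cancel_left_of_coprime
      (Nat.coprime_two_right.2 hN) hmod) (mem_range.1 hk) (mem_range.1 hl)
  have himage : (range N).image φ = univ :=
    eq_univ_of_card _ (by rw [card_image_of_injOn hφ, card_range, Fintype.card_fin])
  have hstep : ∀ k, φ (k + 1) = φ k + 2 := fun k => by simp only [φ]; push_cast; ring
  have hloop : a (φ N) = a (φ 0) := by simp [φ]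
  rw [← himage, sum_image hφ]
  simpa only [hstep] using
    two_mul_sub_one_le_sum_range_abs_sub (F := fun k => a (φ k)) hloop (ha.comp_injOn hφ)

/-- For `N = 2 m`, `k ↦ 2 k` and `k ↦ 2 k + 1` each walk once around half of `Fin N`. -/
theorem two_mul_sub_two_le_sum_abs_sub_of_even (hN : Even N) {a : Fin N → ℤ} (ha : Injective a) :
    2 * ((N : ℤ) - 2) ≤ ∑ i, |a (i + 2) - a i| := by
  obtain ⟨m, hm⟩ := hN.two_dvd
  have horbit : ∀ r < 2, 2 * ((m : ℤ) - 1) ≤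
      ∑ k ∈ range m, |a (((2 * k + r : ℕ) : Fin N) + 2) - a ((2 * k + r : ℕ) : Fin N)| := by
    intro r hr
    set φ : ℕ → Fin N := fun k => ((2 * k + r : ℕ) : Fin N)
    have hφ : Set.InjOn φ (range m) := by
      intro k hk l hl h
      have hval := congrArg Fin.val h
      simp only [φ, Fin.val_natCast] at hval
      rw [Nat.mod_eq_of_lt, Nat.mod_eq_of_lt] at hval <;> simp at hk hl <;> omega
    have hstep : ∀ k, φ (k + 1) = φ k + 2 := fun k => by simp only [φ]; push_cast; ring
    have hloop : a (φ m) = a (φ 0) := by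
      simp only [φ]
      rw [← hm]
      simp
    simpa only [hstep] using
      two_mul_sub_one_le_sum_range_abs_sub (F := fun k => a (φ k)) hloop (ha.comp_injOn hφ)
  have hNm : (N : ℤ) = 2 * m := by exact_mod_cast hm
  rw [Fin.sum_univ_eq_sum_range_natCast, show range N = range (2 * m) by rw [hm],
    sum_range_two_mul, sum_add_distrib]
  have h0 := horbit 0 (by norm_num)
  have h1 := horbit 1 (by norm_num)
  simp only [add_zero] at h0
  linarith

theorem sum_abs_sub_add_two_le_two_mul_sum_sq (a : Fin N → ℤ) (c : ℤ) :
    ∑ i, |a (i + 2) - a i| ≤ 2 * ∑ v, (a (v - 1) + a v - c) ^ 2 := by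
  set d : Fin N → ℤ := fun v => a (v - 1) + a v - c
  have hreindex : ∑ i, |a (i + 2) - a i| = ∑ v, |d (v + 1) - d v| := by
    rw [← (Equiv.subRight 1).sum_comp]
    refine sum_congr rfl fun v _ => ?_
    simp only [Equiv.subRight_apply, d, add_sub_cancel_right]
    ring_nf
  have hshift : ∑ v, |d (v + 1)| = ∑ v, |d v| := Equiv.sum_comp (Equiv.addRight 1) fun v => |d v|
  calc ∑ i, |a (i + 2) - a i| = ∑ v, |d (v + 1) - d v| := hreindex
    _ ≤ ∑ v, (|d (v + 1)| + |d v|) := sum_le_sum fun v _ => abs_sub _ _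
    _ = 2 * ∑ v, |d v| := by rw [sum_add_distrib, hshift, two_mul]
    _ ≤ 2 * ∑ v, d v ^ 2 := by
      gcongr with v
      simpa using Int.natAbs_le_self_sq (d v)

end StepTwo

section CyclicLabeling

variable {N : ℕ}

theorem bijOn_univ_Icc_of_injective {a : Fin N → ℕ} (ha : Injective a)
    (hmem : ∀ i, a i ∈ Set.Icc 1 N) : Set.BijOn a Set.univ (Set.Icc 1 N) := by
  refine ⟨fun i _ => hmem i, ha.injOn, ?_⟩
  simpa using surjOn_of_injOn_of_card_le (s := univ) (t := Icc 1 N) a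
    (fun i _ => by simpa using hmem i) ha.injOn (by simp)

variable (N) in
def oddZigzag (i : Fin N) : ℕ := if (i : ℕ) % 2 = 0 then i + 1 else N - i

variable (N) in
/-- `oddZigzag` on the first half of the cycle, with the parities swapped on the second half. -/
def evenZigzag (i : Fin N) : ℕ := if ((i : ℕ) % 2 = 0 ↔ 2 * (i : ℕ) < N) then i + 1 else N - i

theorem oddZigzag_bijOn (hN : Odd N) : Set.BijOn (oddZigzag N) Set.univ (Set.Icc 1 N) := by
  obtain ⟨k, hk⟩ := hN
  refine bijOn_univ_Icc_of_injective (fun i j h => ?_) fun i => ?_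
  all_goals have := i.isLt
  · have := j.isLt
    simp only [oddZigzag] at h
    split_ifs at h <;> omega
  · simp only [oddZigzag, Set.mem_Icc]
    split_ifs <;> omega

theorem evenZigzag_bijOn (hN : Even N) : Set.BijOn (evenZigzag N) Set.univ (Set.Icc 1 N) := by
  obtain ⟨k, hk⟩ := hN
  refine bijOn_univ_Icc_of_injective (fun i j h => ?_) fun i => ?_
  all_goals have := i.isLt
  · have := j.isLt
    simp only [evenZigzag] at h
    split_ifs at h <;> omega
  · simp only [evenZigzag, Set.mem_Icc]
    split_ifs <;> omega

variable [NeZero N]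

/-- The popularity of vertex `v` of the `N`-cycle when the edge `{i, i + 1}` is labelled `a i`. -/
def cyclicPopularity (a : Fin N → ℕ) (v : Fin N) : ℕ := a (v - 1) + a v

def cyclicVariance (a : Fin N → ℕ) : ℤ := ∑ v, ((cyclicPopularity a v : ℤ) - (N + 1)) ^ 2

theorem sum_abs_sub_add_two_le_two_mul_cyclicVariance (a : Fin N → ℕ) :
    ∑ i, |(a (i + 2) : ℤ) - a i| ≤ 2 * cyclicVariance a := by
  simpa [cyclicVariance, cyclicPopularity] using
    sum_abs_sub_add_two_le_two_mul_sum_sq (fun i => (a i : ℤ)) (N + 1)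

theorem sub_one_le_cyclicVariance_of_odd (hN : Odd N) {a : Fin N → ℕ} (ha : Injective a) :
    (N : ℤ) - 1 ≤ cyclicVariance a := by
  linarith [sum_abs_sub_add_two_le_two_mul_cyclicVariance a,
    two_mul_sub_one_le_sum_abs_sub_of_odd hN (a := fun i => (a i : ℤ))
      fun i j h => ha (Int.ofNat_inj.1 h)]

theorem sub_two_le_cyclicVariance_of_even (hN : Even N) {a : Fin N → ℕ} (ha : Injective a) :
    (N : ℤ) - 2 ≤ cyclicVariance a := by
  linarith [sum_abs_sub_add_two_le_two_mul_cyclicVariance a,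
    two_mul_sub_two_le_sum_abs_sub_of_even hN (a := fun i => (a i : ℤ))
      fun i j h => ha (Int.ofNat_inj.1 h)]

/-- Both ends of the edge labelled `1` reach `N + 1` only if both neighbouring edges are
labelled `N`. -/
theorem exists_cyclicPopularity_le (hN : 2 < N) {a : Fin N → ℕ}
    (ha : Set.BijOn a Set.univ (Set.Icc 1 N)) : ∃ v, cyclicPopularity a v ≤ N := by
  obtain ⟨i, -, hi⟩ := ha.surjOn (Set.left_mem_Icc.2 (by omega : 1 ≤ N))
  have hne : a (i - 1) ≠ a (i + 1) := fun h =>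
    Fin.sub_one_ne_add_one hN i (ha.injOn (Set.mem_univ _) (Set.mem_univ _) h)
  have hle : ∀ j, a j ≤ N := fun j => (ha.mapsTo (Set.mem_univ j)).2
  by_cases hlt : a (i - 1) < N
  · exact ⟨i, by simp only [cyclicPopularity, hi]; omega⟩
  · refine ⟨i + 1, ?_⟩
    simp only [cyclicPopularity, add_sub_cancel_right, hi]
    have := hle (i - 1)
    have := hle (i + 1)
    omega

theorem cyclicVariance_eq_of_forall_mem_Icc {a : Fin N → ℕ}
    (ha : ∀ v, cyclicPopularity a v ∈ Icc N (N + 2)) :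
    cyclicVariance a = N - #{v | cyclicPopularity a v = N + 1} := by
  have hterm : ∀ v, ((cyclicPopularity a v : ℤ) - (N + 1)) ^ 2 =
      1 - if cyclicPopularity a v = N + 1 then 1 else 0 := by
    intro v
    have := mem_Icc.1 (ha v)
    split_ifs with h
    · simp [h]
    · obtain h' | h' : cyclicPopularity a v = N ∨ cyclicPopularity a v = N + 2 := by omega
      all_goals rw [h']; push_cast; ring
  rw [cyclicVariance, sum_congr rfl fun v _ => hterm v, sum_sub_distrib, card_filter]
  simp

theorem cyclicPopularity_oddZigzag (hN : Odd N) (v : Fin N) :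
    cyclicPopularity (oddZigzag N) v ∈ Icc N (N + 2) ∧
      (cyclicPopularity (oddZigzag N) v = N + 1 ↔ v = 0) := by
  obtain ⟨n, rfl⟩ := Nat.exists_eq_succ_of_ne_zero (NeZero.ne N)
  obtain ⟨k, hk⟩ := hN
  have := v.isLt
  simp only [cyclicPopularity, oddZigzag, Fin.coe_sub_one, mem_Icc, Fin.ext_iff, Fin.val_zero]
  split_ifs <;> omega

theorem cyclicPopularity_evenZigzag (hN : Even N) (v : Fin N) :
    cyclicPopularity (evenZigzag N) v ∈ Icc N (N + 2) ∧
      (cyclicPopularity (evenZigzag N) v = N + 1 ↔ (v : ℕ) = 0 ∨ 2 * (v : ℕ) = N) := by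
  obtain ⟨n, rfl⟩ := Nat.exists_eq_succ_of_ne_zero (NeZero.ne N)
  obtain ⟨k, hk⟩ := hN
  have := v.isLt
  simp only [cyclicPopularity, evenZigzag, Fin.coe_sub_one, mem_Icc, Fin.ext_iff, Fin.val_zero]
  split_ifs <;> omega

theorem cyclicVariance_oddZigzag (hN : Odd N) : cyclicVariance (oddZigzag N) = N - 1 := by
  rw [cyclicVariance_eq_of_forall_mem_Icc fun v => (cyclicPopularity_oddZigzag hN v).1]
  simp [(cyclicPopularity_oddZigzag hN _).2, filter_eq']

theorem cyclicVariance_evenZigzag (hN : Even N) : cyclicVariance (evenZigzag N) = N - 2 := by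
  obtain ⟨k, hk⟩ := hN
  have := NeZero.pos N
  have hzeros : ({v | (v : ℕ) = 0 ∨ 2 * (v : ℕ) = N} : Finset (Fin N)) = {0, ⟨k, by omega⟩} := by
    ext v
    simp only [mem_filter, mem_univ, true_and, mem_insert, mem_singleton, Fin.ext_iff,
      Fin.val_zero]
    omega
  rw [cyclicVariance_eq_of_forall_mem_Icc fun v => (cyclicPopularity_evenZigzag ⟨k, hk⟩ v).1]
  simp only [(cyclicPopularity_evenZigzag ⟨k, hk⟩ _).2, hzeros,
    card_pair (show (0 : Fin N) ≠ ⟨k, _⟩ by simp only [ne_eq, Fin.ext_iff, Fin.val_zero]; omega)]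
  norm_num

theorem exists_optimal_cyclic_labeling :
    ∃ a : Fin N → ℕ, Set.BijOn a Set.univ (Set.Icc 1 N) ∧ (∀ v, N ≤ cyclicPopularity a v) ∧
      ∀ a' : Fin N → ℕ, Set.BijOn a' Set.univ (Set.Icc 1 N) →
        cyclicVariance a ≤ cyclicVariance a' := by
  rcases Nat.even_or_odd N with hN | hN
  · refine ⟨evenZigzag N, evenZigzag_bijOn hN,
      fun v => (mem_Icc.1 (cyclicPopularity_evenZigzag hN v).1).1, fun a' ha' => ?_⟩
    rw [cyclicVariance_evenZigzag hN]
    exact sub_two_le_cyclicVariance_of_even hN (Set.injOn_univ.1 ha'.injOn)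
  · refine ⟨oddZigzag N, oddZigzag_bijOn hN,
      fun v => (mem_Icc.1 (cyclicPopularity_oddZigzag hN v).1).1, fun a' ha' => ?_⟩
    rw [cyclicVariance_oddZigzag hN]
    exact sub_one_le_cyclicVariance_of_odd hN (Set.injOn_univ.1 ha'.injOn)

end CyclicLabeling

section CycleGraph

open SimpleGraph

theorem popularity_eq_sum_neighborFinset {V : Type*} [Fintype V] [DecidableEq V]
    (G : SimpleGraph V) [DecidableRel G.Adj] (σ : Sym2 V → ℕ) (v : V) :
    popularity G σ v = ∑ w ∈ G.neighborFinset v, σ s(v, w) := by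
  classical
  have himage : {e ∈ G.edgeFinset | v ∈ e} = (G.neighborFinset v).image (s(v, ·)) := by
    ext e
    induction e using Sym2.ind with
    | _ x y =>
      simp only [mem_filter, mem_edgeFinset, mem_edgeSet, Sym2.mem_iff, mem_image,
        mem_neighborFinset, Sym2.eq_iff]
      constructor
      · rintro ⟨h, rfl | rfl⟩
        · exact ⟨y, h, Or.inl ⟨rfl, rfl⟩⟩
        · exact ⟨x, h.symm, Or.inr ⟨rfl, rfl⟩⟩
      · rintro ⟨w, h, ⟨rfl, rfl⟩ | ⟨rfl, rfl⟩⟩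
        · exact ⟨h, Or.inl rfl⟩
        · exact ⟨h.symm, Or.inr rfl⟩
  unfold popularity
  convert sum_image (f := σ) (fun x _ y _ h => Sym2.congr_right.1 h) using 2
  convert himage

variable {N : ℕ} [NeZero N]

def cycleLabels (σ : Sym2 (Fin N) → ℕ) (i : Fin N) : ℕ := σ s(i, i + 1)

theorem injective_sym2_mk_add_one (hN : 2 < N) : Injective fun i : Fin N => s(i, i + 1) := by
  intro i j h
  rcases Sym2.eq_iff.1 h with ⟨hij, -⟩ | ⟨hij, hji⟩
  · exact hij
  · refine absurd ?_ (Fin.sub_one_ne_add_one hN i)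
    rw [hji, hij, add_sub_cancel_right]

variable (n : ℕ)

theorem cycleGraph_edgeSet :
    (cycleGraph (n + 2)).edgeSet = Set.range fun i : Fin (n + 2) => s(i, i + 1) := by
  ext e
  induction e using Sym2.ind with
  | _ u v =>
    simp only [mem_edgeSet, cycleGraph_adj, Set.mem_range, Sym2.eq_iff, sub_eq_iff_eq_add]
    constructor
    · rintro (rfl | rfl)
      · exact ⟨v, Or.inr ⟨rfl, add_comm _ _⟩⟩
      · exact ⟨u, Or.inl ⟨rfl, add_comm _ _⟩⟩
    · rintro ⟨i, ⟨rfl, rfl⟩ | ⟨rfl, rfl⟩⟩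
      · exact Or.inr (add_comm _ _)
      · exact Or.inl (add_comm _ _)

theorem popularity_cycleGraph (σ : Sym2 (Fin (n + 3)) → ℕ) :
    popularity (cycleGraph (n + 3)) σ = cyclicPopularity (cycleLabels σ) := by
  funext v
  rw [popularity_eq_sum_neighborFinset, cycleGraph_neighborFinset,
    sum_pair (Fin.sub_one_ne_add_one (by omega) v), cyclicPopularity, cycleLabels, cycleLabels,
    sub_add_cancel, Sym2.eq_swap]

theorem isEdgeLabeling_cycleGraph_iff (σ : Sym2 (Fin (n + 3)) → ℕ) :
    IsEdgeLabeling (cycleGraph (n + 3)) σ ↔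
      Set.BijOn (cycleLabels σ) Set.univ (Set.Icc 1 (n + 3)) := by
  have hinj := injective_sym2_mk_add_one (N := n + 3) (by omega)
  rw [IsEdgeLabeling, cycleGraph_edgeSet, Nat.card_range_of_injective hinj,
    Nat.card_eq_fintype_card, Fintype.card_fin, ← Set.image_univ,
    ← Set.bijOn_comp_iff hinj.injOn]
  rfl

end CycleGraph

/-- For every `θ ≥ 3` there is an edge labeling of the cycle `C_θ`
that is simultaneously optimal for the MaxMinSum problem (it maximizes the minimum
popularity `min_v p_v`) and the MinVar problem (it minimizes the access-variance
`Σ_v (p_v − (θ+1))²`). -/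
theorem statement13 (θ : ℕ) (hθ : 3 ≤ θ) :
    ∃ σ : Sym2 (Fin θ) → ℕ, IsEdgeLabeling (SimpleGraph.cycleGraph θ) σ ∧
      ∀ σ' : Sym2 (Fin θ) → ℕ, IsEdgeLabeling (SimpleGraph.cycleGraph θ) σ' →
        sInf (Set.range (popularity (SimpleGraph.cycleGraph θ) σ')) ≤
            sInf (Set.range (popularity (SimpleGraph.cycleGraph θ) σ)) ∧
          (∑ v : Fin θ, ((popularity (SimpleGraph.cycleGraph θ) σ v : ℚ) - (θ + 1)) ^ 2) ≤
            ∑ v : Fin θ, ((popularity (SimpleGraph.cycleGraph θ) σ' v : ℚ) - (θ + 1)) ^ 2 := by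
  obtain ⟨n, rfl⟩ : ∃ n, θ = n + 3 := ⟨θ - 3, by omega⟩
  obtain ⟨a, ha, hmin, hopt⟩ := exists_optimal_cyclic_labeling (N := n + 3)
  have hinj := injective_sym2_mk_add_one (N := n + 3) (by omega)
  set σ := extend (fun i : Fin (n + 3) => s(i, i + 1)) a 0
  have hσ : cycleLabels σ = a := funext fun i => hinj.extend_apply a 0 i
  refine ⟨σ, (isEdgeLabeling_cycleGraph_iff n σ).2 (hσ ▸ ha), fun σ' hσ' => ?_⟩
  rw [isEdgeLabeling_cycleGraph_iff] at hσ'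
  simp only [popularity_cycleGraph, hσ]
  constructor
  · obtain ⟨v, hv⟩ := exists_cyclicPopularity_le (by omega) hσ'
    exact (Nat.sInf_le (Set.mem_range_self v)).trans
      (hv.trans (le_csInf (Set.range_nonempty _) (Set.forall_mem_range.2 hmin)))
  · have := hopt _ hσ'
    unfold cyclicVariance at this
    exact_mod_cast this
end

section
/- Let H₁ = (V,E₁) be a d₁-regular graph and H₂ = (V,E₂) a d₂-regular graph on the same finite vertex set V with E₁ ∩ E₂ = ∅, and suppose H₁ is supermagic. Then the (d₁+d₂)-regular graph G = (V, E₁ ∪ E₂) satisfies MinVar(G) ≤ MinVar(H₂). -/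
/-! Shift a supermagic labeling of `H₁` so that it uses the labels `θ₂ + 1, …, θ₂ + θ₁`, and
glue it to an arbitrary labeling of `H₂` by `1, …, θ₂`. Every vertex of `H₁ ⊔ H₂` then has the
popularity it had in `H₂` plus the same magic constant. For a regular graph the centre
`d(θ+1)/2` of the access-variance is the mean popularity, so the access-variance is a sum of
squared deviations from the mean, which a constant shift does not change. Thus every value of
the access-variance of `H₂` is attained on `H₁ ⊔ H₂`. -/

open Finset

/-- The access-variance of a `d`-regular graph `G` under edge labeling `σ`:
`Σ_v (p_v − d(θ+1)/2)²`, where `θ` is the number of edges of `G`. -/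
noncomputable def accessVar {V : Type*} [Fintype V] (G : SimpleGraph V) (d : ℕ)
    (σ : Sym2 V → ℕ) : ℝ :=
  ∑ v : V, ((popularity G σ v : ℝ) - d * (Nat.card G.edgeSet + 1) / 2) ^ 2

/-- `MinVar(G)`: the minimum of the access-variance over all edge labelings of the
`d`-regular graph `G` (the infimum of the finite nonempty set of achievable values). -/
noncomputable def minVar {V : Type*} [Fintype V] (G : SimpleGraph V) (d : ℕ) : ℝ :=
  sInf { x | ∃ σ : Sym2 V → ℕ, IsEdgeLabeling G σ ∧ accessVar G d σ = x }

/-- A graph `H` is supermagic if its edges can be labeled bijectively with consecutive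
positive integers `a, a+1, …, a+|E|−1` so that all vertex sums are equal. -/
def Supermagic {V : Type*} [Fintype V] (H : SimpleGraph V) : Prop :=
  ∃ (a : ℕ) (σ : Sym2 V → ℕ) (c : ℕ), 0 < a ∧
    Set.BijOn σ H.edgeSet (Set.Icc a (a + Nat.card H.edgeSet - 1)) ∧
    ∀ v : V, popularity H σ v = c

theorem Set.BijOn.piecewise_union {α β : Type*} {s₁ s₂ : Set α} {t₁ t₂ : Set β}
    [DecidablePred (· ∈ s₂)] {f g : α → β} (hs : Disjoint s₁ s₂) (ht : Disjoint t₁ t₂)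
    (hf : Set.BijOn f s₁ t₁) (hg : Set.BijOn g s₂ t₂) :
    Set.BijOn (s₂.piecewise g f) (s₁ ∪ s₂) (t₁ ∪ t₂) := by
  have hf' : Set.BijOn (s₂.piecewise g f) s₁ t₁ :=
    hf.congr fun x hx => (Set.piecewise_eq_of_notMem _ _ _ (hs.notMem_of_mem_left hx)).symm
  have hg' : Set.BijOn (s₂.piecewise g f) s₂ t₂ :=
    hg.congr fun x hx => (Set.piecewise_eq_of_mem _ _ _ hx).symm
  refine hf'.union hg' ((Set.injOn_union hs).2 ⟨hf'.injOn, hg'.injOn, ?_⟩)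
  exact fun x hx y hy => ht.ne_of_mem (hf'.mapsTo hx) (hg'.mapsTo hy)

theorem Nat.bijOn_sub_add_Ico (a b n : ℕ) :
    Set.BijOn (fun k => k - a + b) (Set.Ico a (a + n)) (Set.Ico b (b + n)) := by
  refine Set.InvOn.bijOn (f' := fun k => k - b + a) ⟨?_, ?_⟩ ?_ ?_ <;>
    intro k hk <;> simp only [Set.mem_Ico] at * <;> omega

theorem Finset.two_mul_sum_Icc_one_id (n : ℕ) : 2 * ∑ i ∈ Icc 1 n, i = n * (n + 1) := by
  induction n with
  | zero => simp
  | succ n ih => rw [sum_Icc_succ_top (by omega), mul_add, ih]; ring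

theorem Finset.sum_sq_sub_eq_of_add_const {ι : Type*} [Fintype ι] {x y : ι → ℝ} {m m' k : ℝ}
    (hy : ∀ i, y i = x i + k) (hx : ∑ i, x i = Fintype.card ι * m)
    (hy' : ∑ i, y i = Fintype.card ι * m') :
    ∑ i, (y i - m') ^ 2 = ∑ i, (x i - m) ^ 2 := by
  cases isEmpty_or_nonempty ι
  · simp
  have hm' : m' = m + k := by
    refine mul_left_cancel₀ (Nat.cast_ne_zero.2 Fintype.card_ne_zero : (Fintype.card ι : ℝ) ≠ 0) ?_
    rw [← hy', sum_congr rfl fun i _ => hy i, sum_add_distrib, hx]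
    simp [mul_add]
  exact sum_congr rfl fun i _ => by rw [hy, hm']; ring

namespace SimpleGraph

variable {V : Type*} [Fintype V]

theorem card_mul_eq_two_mul_card_edgeSet {G : SimpleGraph V} [DecidableRel G.Adj] {d : ℕ}
    (hG : G.IsRegularOfDegree d) : Fintype.card V * d = 2 * Nat.card G.edgeSet := by
  classical
  rw [Nat.card_eq_fintype_card, ← edgeFinset_card, ← sum_degrees_eq_twice_card_edges,
    sum_congr rfl fun v _ => hG v, sum_const, smul_eq_mul, card_univ]

theorem card_edgeSet_sup {H₁ H₂ : SimpleGraph V} (hdisj : Disjoint H₁.edgeSet H₂.edgeSet) :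
    Nat.card (H₁ ⊔ H₂).edgeSet = Nat.card H₁.edgeSet + Nat.card H₂.edgeSet := by
  simp only [Nat.card_coe_set_eq, edgeSet_sup]
  exact Set.ncard_union_eq hdisj

end SimpleGraph

open SimpleGraph

theorem IsEdgeLabeling.two_mul_sum_eq {V : Type*} {G : SimpleGraph V} [Fintype G.edgeSet]
    {σ : Sym2 V → ℕ} (hσ : IsEdgeLabeling G σ) :
    2 * ∑ e ∈ G.edgeFinset, σ e = Nat.card G.edgeSet * (Nat.card G.edgeSet + 1) := by
  have hbij : Set.BijOn σ G.edgeFinset (Icc 1 (Nat.card G.edgeSet)) := by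
    rwa [coe_edgeFinset, coe_Icc]
  rw [sum_nbij (f := σ) (g := fun k => k) σ (fun e he => hbij.mapsTo he) hbij.injOn hbij.surjOn
    fun _ _ => rfl, two_mul_sum_Icc_one_id]

section

variable {V : Type*} [Fintype V]

theorem exists_isEdgeLabeling (G : SimpleGraph V) : ∃ σ, IsEdgeLabeling G σ := by
  refine (Set.toFinite _).exists_bijOn_of_encard_eq ?_
  rw [← Set.Finite.cast_ncard_eq (Set.toFinite _), ← Nat.card_coe_set_eq, ← coe_Icc,
    Set.encard_coe_eq_coe_finsetCard, Nat.card_Icc, Nat.add_sub_cancel]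

theorem popularity_eq_sum_filter [DecidableEq V] (G : SimpleGraph V) [Fintype G.edgeSet]
    (σ : Sym2 V → ℕ) (v : V) :
    popularity G σ v = ∑ e ∈ G.edgeFinset with v ∈ e, σ e := by
  unfold popularity
  convert rfl

theorem popularity_congr (G : SimpleGraph V) {σ σ' : Sym2 V → ℕ} (h : Set.EqOn σ σ' G.edgeSet)
    (v : V) : popularity G σ v = popularity G σ' v := by
  classical
  simp only [popularity_eq_sum_filter]
  exact sum_congr rfl fun e he => h (mem_edgeFinset.1 (mem_filter.1 he).1)

theorem popularity_sup {H₁ H₂ : SimpleGraph V} (hdisj : Disjoint H₁.edgeSet H₂.edgeSet)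
    (σ : Sym2 V → ℕ) (v : V) :
    popularity (H₁ ⊔ H₂) σ v = popularity H₁ σ v + popularity H₂ σ v := by
  classical
  simp only [popularity_eq_sum_filter, edgeFinset_sup, filter_union]
  refine sum_union (disjoint_filter_filter ?_)
  rwa [← disjoint_coe, coe_edgeFinset, coe_edgeFinset]

theorem popularity_add_const {G : SimpleGraph V} [DecidableRel G.Adj] {d : ℕ}
    (hG : G.IsRegularOfDegree d) (σ : Sym2 V → ℕ) (k : ℕ) (v : V) :
    popularity G (fun e => σ e + k) v = popularity G σ v + d * k := by
  classical
  rw [popularity_eq_sum_filter, popularity_eq_sum_filter, sum_add_distrib, sum_const,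
    smul_eq_mul, ← incidenceFinset_eq_filter, card_incidenceFinset_eq_degree, hG v]

theorem sum_popularity [DecidableEq V] (G : SimpleGraph V) [Fintype G.edgeSet]
    (σ : Sym2 V → ℕ) : ∑ v, popularity G σ v = 2 * ∑ e ∈ G.edgeFinset, σ e := by
  simp only [popularity_eq_sum_filter, sum_filter]
  rw [sum_comm, mul_sum]
  refine sum_congr rfl fun e he => ?_
  have hcard : #({v | v ∈ e} : Finset V) = 2 := by
    rw [← Sym2.card_toFinset_of_not_isDiag e (G.not_isDiag_of_mem_edgeFinset he)]
    congr 1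
    ext v
    simp [Sym2.mem_toFinset]
  rw [← sum_filter, sum_const, hcard, smul_eq_mul]

theorem IsEdgeLabeling.sum_popularity {G : SimpleGraph V} {σ : Sym2 V → ℕ}
    (hσ : IsEdgeLabeling G σ) {d : ℕ} (hd : Fintype.card V * d = 2 * Nat.card G.edgeSet) :
    ∑ v, (popularity G σ v : ℝ) = Fintype.card V * (d * (Nat.card G.edgeSet + 1) / 2) := by
  classical
  have h : ∑ v, popularity G σ v = Nat.card G.edgeSet * (Nat.card G.edgeSet + 1) := by
    rw [_root_.sum_popularity, hσ.two_mul_sum_eq]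
  have hd' : (Fintype.card V : ℝ) * d = 2 * Nat.card G.edgeSet := by exact_mod_cast hd
  rw [← Nat.cast_sum, h]
  push_cast
  linear_combination -(Nat.card G.edgeSet + 1 : ℝ) / 2 * hd'

theorem Supermagic.exists_bijOn_Ico {H : SimpleGraph V} [DecidableRel H.Adj] {d : ℕ}
    (hH : H.IsRegularOfDegree d) (hmagic : Supermagic H) (b : ℕ) :
    ∃ (σ : Sym2 V → ℕ) (c : ℕ), Set.BijOn σ H.edgeSet (Set.Ico b (b + Nat.card H.edgeSet)) ∧
      ∀ v, popularity H σ v = c := by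
  obtain ⟨a, σ, c, ha, hσ, hc⟩ := hmagic
  have hIcc : Set.Icc a (a + Nat.card H.edgeSet - 1) = Set.Ico a (a + Nat.card H.edgeSet) := by
    ext k; simp only [Set.mem_Icc, Set.mem_Ico]; omega
  rw [hIcc] at hσ
  refine ⟨fun e => σ e - a + b, c + d * b - d * a, (Nat.bijOn_sub_add_Ico a b _).comp hσ,
    fun v => ?_⟩
  have hshift : popularity H (fun e => σ e - a + b + a) v = popularity H (fun e => σ e + b) v :=
    popularity_congr H (fun e he => by have := (hσ.mapsTo he).1; omega) v
  rw [popularity_add_const hH (fun e => σ e - a + b), popularity_add_const hH σ, hc] at hshift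
  omega

theorem exists_isEdgeLabeling_sup {H₁ H₂ : SimpleGraph V} (hdisj : Disjoint H₁.edgeSet H₂.edgeSet)
    {σ₁ σ₂ : Sym2 V → ℕ}
    (hσ₁ : Set.BijOn σ₁ H₁.edgeSet
      (Set.Ico (Nat.card H₂.edgeSet + 1) (Nat.card H₂.edgeSet + 1 + Nat.card H₁.edgeSet)))
    (hσ₂ : IsEdgeLabeling H₂ σ₂) :
    ∃ τ, IsEdgeLabeling (H₁ ⊔ H₂) τ ∧
      ∀ v, popularity (H₁ ⊔ H₂) τ v = popularity H₁ σ₁ v + popularity H₂ σ₂ v := by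
  classical
  have hIcc : Set.Icc 1 (Nat.card (H₁ ⊔ H₂).edgeSet) =
      Set.Ico (Nat.card H₂.edgeSet + 1) (Nat.card H₂.edgeSet + 1 + Nat.card H₁.edgeSet) ∪
        Set.Icc 1 (Nat.card H₂.edgeSet) := by
    ext k; simp only [card_edgeSet_sup hdisj, Set.mem_Icc, Set.mem_Ico, Set.mem_union]; omega
  have hdisjIcc : Disjoint
      (Set.Ico (Nat.card H₂.edgeSet + 1) (Nat.card H₂.edgeSet + 1 + Nat.card H₁.edgeSet))
      (Set.Icc 1 (Nat.card H₂.edgeSet)) :=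
    Set.disjoint_left.2 fun k hk₁ hk₂ => by
      simp only [Set.mem_Icc, Set.mem_Ico] at hk₁ hk₂; omega
  refine ⟨H₂.edgeSet.piecewise σ₂ σ₁, ?_, fun v => ?_⟩
  · rw [IsEdgeLabeling, hIcc, edgeSet_sup]
    exact hσ₁.piecewise_union hdisj hdisjIcc hσ₂
  · rw [popularity_sup hdisj]
    congr 1 <;> refine popularity_congr _ (fun e he => ?_) v
    · exact Set.piecewise_eq_of_notMem _ _ _ (hdisj.notMem_of_mem_left he)
    · exact Set.piecewise_eq_of_mem _ _ _ he

theorem accessVar_nonneg (G : SimpleGraph V) (d : ℕ) (σ : Sym2 V → ℕ) : 0 ≤ accessVar G d σ :=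
  Finset.sum_nonneg fun _ _ => sq_nonneg _

theorem minVar_le {G : SimpleGraph V} {σ : Sym2 V → ℕ} (hσ : IsEdgeLabeling G σ) (d : ℕ) :
    minVar G d ≤ accessVar G d σ :=
  csInf_le ⟨0, by rintro _ ⟨σ, -, rfl⟩; exact accessVar_nonneg G d σ⟩ ⟨σ, hσ, rfl⟩

theorem le_minVar {G : SimpleGraph V} {d : ℕ} {x : ℝ}
    (h : ∀ σ, IsEdgeLabeling G σ → x ≤ accessVar G d σ) : x ≤ minVar G d := by
  obtain ⟨σ, hσ⟩ := exists_isEdgeLabeling G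
  exact le_csInf ⟨_, σ, hσ, rfl⟩ (by rintro _ ⟨σ, hσ, rfl⟩; exact h σ hσ)


theorem accessVar_eq_of_popularity_eq_add {G G' : SimpleGraph V} {d d' : ℕ}
    {σ τ : Sym2 V → ℕ} (hσ : IsEdgeLabeling G σ) (hd : Fintype.card V * d = 2 * Nat.card G.edgeSet)
    (hτ : IsEdgeLabeling G' τ) (hd' : Fintype.card V * d' = 2 * Nat.card G'.edgeSet) {k : ℕ}
    (h : ∀ v, popularity G' τ v = popularity G σ v + k) :
    accessVar G' d' τ = accessVar G d σ :=
  sum_sq_sub_eq_of_add_const (k := k) (fun v => by rw [h v, Nat.cast_add])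
    (hσ.sum_popularity hd) (hτ.sum_popularity hd')

end

/-- If `H₁` is a `d₁`-regular graph and `H₂` a `d₂`-regular graph on
the same vertex set with disjoint edge sets, and `H₁` is supermagic, then the
`(d₁+d₂)`-regular graph `G = H₁ ∪ H₂` satisfies `MinVar(G) ≤ MinVar(H₂)`. -/
theorem statement15 {V : Type*} [Fintype V] (H₁ H₂ : SimpleGraph V)
    [DecidableRel H₁.Adj] [DecidableRel H₂.Adj] (d₁ d₂ : ℕ)
    (h₁ : H₁.IsRegularOfDegree d₁) (h₂ : H₂.IsRegularOfDegree d₂)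
    (hdisj : Disjoint H₁.edgeSet H₂.edgeSet) (hmagic : Supermagic H₁) :
    minVar (H₁ ⊔ H₂) (d₁ + d₂) ≤ minVar H₂ d₂ := by
  obtain ⟨σ₁, c, hσ₁, hc⟩ := hmagic.exists_bijOn_Ico h₁ (Nat.card H₂.edgeSet + 1)
  have hcard₂ := card_mul_eq_two_mul_card_edgeSet h₂
  have hcard : Fintype.card V * (d₁ + d₂) = 2 * Nat.card (H₁ ⊔ H₂).edgeSet := by
    rw [card_edgeSet_sup hdisj, mul_add, mul_add, card_mul_eq_two_mul_card_edgeSet h₁, hcard₂]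
  refine le_minVar fun σ₂ hσ₂ => ?_
  obtain ⟨τ, hτ, hpop⟩ := exists_isEdgeLabeling_sup hdisj hσ₁ hσ₂
  calc minVar (H₁ ⊔ H₂) (d₁ + d₂) ≤ accessVar (H₁ ⊔ H₂) (d₁ + d₂) τ := minVar_le hτ _
    _ = accessVar H₂ d₂ σ₂ :=
      accessVar_eq_of_popularity_eq_add hσ₂ hcard₂ hτ hcard fun v => by rw [hpop, hc, add_comm]
end
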